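/- arXiv:2311.08797 — 7 statements merged into one kernel-verified Lean document; each statement's English description precedes it below -/
import Mathlib

section
/- For every prime p, letting G = (ℤ/pℤ)³, there exists a saturated transfer system ℛ on G such that no U ∈ 𝒰_G satisfies Tr(U) = ℛ. Explicitly, fixing a subgroup H ≤ G of order p² and letting ℛ be the relation with (W',W) ∈ ℛ iff W' ≤ W and (W' = W or W ≤ H), ℛ is a saturated transfer system and there is no U ∈ 𝒰_G with Tr(U) = ℛ. -/
open scoped Classical

/-- The character group of `G`: monoid homomorphisms to `ℂˣ`. -/
abbrev CharGp (G : Type*) [Group G] := G →* ℂˣ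

/-- Complex conjugation acting on characters: `χ ↦ χ̄`. -/
noncomputable def charConj {G : Type*} [Group G] (χ : CharGp G) : CharGp G :=
  (Units.map (starRingEnd ℂ).toMonoidHom).comp χ

/-- Restriction of characters along an inclusion of subgroups: `R_K^H` on elements. -/
def resChar {G : Type*} [Group G] {K H : Subgroup G} (h : K ≤ H) (χ : CharGp H) : CharGp K :=
  χ.comp (Subgroup.inclusion h)

/-- Restriction of a character of `G` itself to a subgroup. -/
def resCharTop {G : Type*} [Group G] (K : Subgroup G) (χ : CharGp G) : CharGp K :=
  χ.comp K.subtype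

/-- A transfer system on a finite group `G`: a partial order on subgroups refining
inclusion, closed under conjugation and under intersection-pullback. -/
structure TransferSystem (G : Type*) [Group G] where
  rel : Subgroup G → Subgroup G → Prop
  le_of_rel : ∀ {K H : Subgroup G}, rel K H → K ≤ H
  refl : ∀ H : Subgroup G, rel H H
  trans : ∀ {K L H : Subgroup G}, rel K L → rel L H → rel K H
  conj : ∀ {K H : Subgroup G} (g : G), rel K H →
    rel (K.map (MulAut.conj g).toMonoidHom) (H.map (MulAut.conj g).toMonoidHom)
  inf_rel : ∀ {K H : Subgroup G} (L : Subgroup G), rel K H → L ≤ H → rel (K ⊓ L) L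

/-- A transfer system is saturated if `(K,H) ∈ ℛ` and `K ≤ L ≤ H` imply `(L,H) ∈ ℛ`. -/
def TransferSystem.Saturated {G : Type*} [Group G] (R : TransferSystem G) : Prop :=
  ∀ ⦃K L H : Subgroup G⦄, R.rel K H → K ≤ L → L ≤ H → R.rel L H

/-- A subgroup `H` is `ℛ`-cofibrant if there is no proper `K < H` with `(K,H) ∈ ℛ`. -/
def TransferSystem.Cofibrant {G : Type*} [Group G] (R : TransferSystem G)
    (H : Subgroup G) : Prop :=
  ¬ ∃ K : Subgroup G, K < H ∧ R.rel K H

/-- `𝒰_G`: subsets of `Ĝ` containing the trivial character and closed under conjugation. -/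
def UnivSet (G : Type*) [Group G] : Set (Set (CharGp G)) :=
  {U | (1 : CharGp G) ∈ U ∧ ∀ χ ∈ U, charConj χ ∈ U}

/-- `Tr(U)`: the relation `{(K,H) : K ≤ H and I_K^H(R_K^G(U)) ⊆ R_H^G(U)}`. -/
def TrRel {G : Type*} [Group G] (U : Set (CharGp G)) (K H : Subgroup G) : Prop :=
  ∃ h : K ≤ H, resChar h ⁻¹' (resCharTop K '' U) ⊆ resCharTop H '' U

/-!
If `Tr(U)` contains `(1, H)`, every character `ψ` of `H` extends to some `s ψ ∈ U`. If it
omits `(1, ⟨w⟩)` for every `w ∉ H`, then for a fixed `z ∉ H` and each `h ∈ H` the values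
`s ψ (z h) = s ψ z * ψ h` miss one of the `p` roots of unity of order dividing `p`; by
Cauchy–Schwarz, summing over `h` gives at least `p⁶ / (p - 1)` coincidences
`s ψ (z h) = s ψ' (z h)`. But for `ψ ≠ ψ'` a coincidence confines `h` to a coset of the kernel
of `ψ' / ψ`, of order at most `p`, so there are at most `p⁴ + p⁵` of them, and
`(p - 1) (p⁴ + p⁵) < p⁶`.
-/

open Finset

theorem card_sq_le_card_image_mul_sum_card_fiber {α β : Type*} [Fintype α] [DecidableEq β]
    (f : α → β) :
    Fintype.card α ^ 2 ≤ #(univ.image f) * ∑ a, #{a' | f a' = f a} := by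
  have hcard : Fintype.card α = ∑ b ∈ univ.image f, #{a | f a = b} :=
    card_eq_sum_card_image f univ
  have hcoll : ∑ a, #{a' | f a' = f a} = ∑ b ∈ univ.image f, #{a | f a = b} ^ 2 := by
    rw [← sum_fiberwise_of_maps_to fun a _ => mem_image_of_mem f (mem_univ a)]
    refine sum_congr rfl fun b _ => ?_
    rw [sq, ← smul_eq_mul, ← sum_const]
    exact sum_congr rfl fun a ha => by rw [(mem_filter.1 ha).2]
  rw [hcard, hcoll]
  exact sq_sum_le_card_mul_sum_sq

theorem card_mul_card_sq_le_of_collisions {X Y β : Type*} [Fintype X] [Fintype Y] [DecidableEq β]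
    (F : Y → X → β) {k c : ℕ} (hk : ∀ y, #(univ.image (F y)) ≤ k)
    (hc : ∀ x x', x ≠ x' → #{y | F y x' = F y x} ≤ c) :
    Fintype.card Y * Fintype.card X ^ 2
      ≤ k * (Fintype.card X * Fintype.card Y + Fintype.card X ^ 2 * c) := by
  have hdiag : ∀ x, ∑ x', #{y | F y x' = F y x} ≤ Fintype.card Y + Fintype.card X * c := by
    intro x
    calc ∑ x', #{y | F y x' = F y x}
        ≤ ∑ x', ((if x = x' then Fintype.card Y else 0) + c) := by
          refine sum_le_sum fun x' _ => ?_
          split_ifs with h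
          · exact le_add_right (card_le_univ _)
          · exact le_add_left (hc x x' h)
      _ = Fintype.card Y + Fintype.card X * c := by
          simp [sum_add_distrib]
  calc Fintype.card Y * Fintype.card X ^ 2
      = ∑ _y : Y, Fintype.card X ^ 2 := by simp
    _ ≤ ∑ y, k * ∑ x, #{x' | F y x' = F y x} :=
        sum_le_sum fun y _ => (card_sq_le_card_image_mul_sum_card_fiber (F y)).trans
          (Nat.mul_le_mul_right _ (hk y))
    _ = k * ∑ x, ∑ x', #{y | F y x' = F y x} := by
        simp only [← mul_sum, card_filter]
        rw [sum_comm]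
        refine congrArg _ (sum_congr rfl fun x _ => ?_)
        rw [sum_comm]
    _ ≤ k * ∑ _x : X, (Fintype.card Y + Fintype.card X * c) :=
        Nat.mul_le_mul_left _ (sum_le_sum fun x _ => hdiag x)
    _ = k * (Fintype.card X * Fintype.card Y + Fintype.card X ^ 2 * c) := by
        simp only [sum_const, card_univ, smul_eq_mul]; ring

theorem MonoidHom.card_fiber_le_card_ker {A M : Type*} [Group A] [Fintype A] [Group M]
    [DecidableEq M] (f : A →* M) (m : M) : #{a | f a = m} ≤ Nat.card f.ker := by
  by_cases hm : m ∈ Set.range f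
  · rw [card_fiber_eq_of_mem_range f hm ⟨1, map_one f⟩, Nat.card_eq_fintype_card,
      Fintype.card_subtype]
    exact card_le_card fun a => by simp
  · rw [card_eq_zero.2 (filter_eq_empty_iff.2 fun a _ ha => hm ⟨a, ha⟩)]
    exact Nat.zero_le _

theorem Subgroup.card_le_of_ne_top {A : Type*} [Group A] {p n : ℕ} (hp : p.Prime)
    (hA : Nat.card A = p ^ (n + 1)) {K : Subgroup A} (hK : K ≠ ⊤) : Nat.card K ≤ p ^ n := by
  have : Finite A := Nat.finite_of_card_ne_zero (by simp [hA, hp.ne_zero])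
  obtain ⟨i, hi, hKi⟩ := (Nat.dvd_prime_pow hp).1 (hA ▸ K.card_subgroup_dvd_card)
  have hin : i ≠ n + 1 := by
    rintro rfl
    exact hK ((K.card_eq_iff_eq_top).1 (hKi.trans hA.symm))
  rw [hKi]
  exact Nat.pow_le_pow_right hp.pos (by omega)

theorem MulAut.conj_toMonoidHom_eq_id {G : Type*} [CommGroup G] (g : G) :
    (MulAut.conj g).toMonoidHom = MonoidHom.id G :=
  MonoidHom.ext fun x => mul_inv_cancel_comm g x

def TransferSystem.below {G : Type*} [CommGroup G] (H : Subgroup G) : TransferSystem G where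
  rel K L := K ≤ L ∧ (K = L ∨ L ≤ H)
  le_of_rel h := h.1
  refl L := ⟨le_rfl, Or.inl rfl⟩
  trans := by
    rintro K L M ⟨hKL, rfl | hL⟩ ⟨hLM, hM⟩
    · exact ⟨hLM, hM⟩
    · exact ⟨hKL.trans hLM, Or.inr (hM.elim (· ▸ hL) id)⟩
  conj g h := by simpa only [MulAut.conj_toMonoidHom_eq_id, Subgroup.map_id] using h
  inf_rel := by
    rintro K M L ⟨-, rfl | hM⟩ hLM
    · exact ⟨inf_le_right, Or.inl (inf_of_le_right hLM)⟩
    · exact ⟨inf_le_right, Or.inr (hLM.trans hM)⟩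

theorem TransferSystem.below_saturated {G : Type*} [CommGroup G] (H : Subgroup G) :
    (TransferSystem.below H).Saturated := by
  rintro K L M ⟨-, rfl | hM⟩ hKL hLM
  · exact ⟨hLM, Or.inl (le_antisymm hLM hKL)⟩
  · exact ⟨hLM, Or.inr hM⟩

theorem trRel_bot_iff {G : Type*} [Group G] {U : Set (CharGp G)} (hU : 1 ∈ U)
    (K : Subgroup G) : TrRel U ⊥ K ↔ resCharTop K '' U = Set.univ := by
  refine ⟨fun ⟨_, h⟩ => Set.eq_univ_of_forall fun ψ => h ⟨1, hU, Subsingleton.elim _ _⟩,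
    fun h => ⟨bot_le, h ▸ Set.subset_univ _⟩⟩

theorem card_image_apply_lt_orderOf {G X : Type*} [CommGroup G] [Finite G] [Fintype X]
    {U : Set (CharGp G)} {s : X → CharGp G} (hs : ∀ x, s x ∈ U) {w : G}
    (hU : resCharTop (Subgroup.zpowers w) '' U ≠ Set.univ) :
    #(univ.image fun x => s x w) < orderOf w := by
  have himage : ↑(univ.image fun x => s x w) ⊆
      (fun ψ : CharGp (Subgroup.zpowers w) => ψ ⟨w, Subgroup.mem_zpowers w⟩) ''
        (resCharTop (Subgroup.zpowers w) '' U) := by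
    simp only [coe_image, coe_univ, Set.image_univ, Set.image_image]
    rintro _ ⟨x, rfl⟩
    exact ⟨s x, hs x, rfl⟩
  calc #(univ.image fun x => s x w)
      = (↑(univ.image fun x => s x w) : Set ℂˣ).ncard := (Set.ncard_coe_finset _).symm
    _ ≤ (resCharTop (Subgroup.zpowers w) '' U).ncard :=
        (Set.ncard_le_ncard himage (Set.toFinite _)).trans (Set.ncard_image_le (Set.toFinite _))
    _ < (Set.univ : Set (CharGp (Subgroup.zpowers w))).ncard :=
        Set.ncard_lt_ncard (Set.ssubset_univ_iff.2 hU)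
    _ = orderOf w := by
        rw [Set.ncard_univ, CommGroup.card_monoidHom_of_hasEnoughRootsOfUnity, Nat.card_zpowers]

theorem exists_zpowers_resCharTop_image_eq_univ {G : Type*} [CommGroup G] [Finite G] {p : ℕ}
    (hp : p.Prime) (hG : ∀ g : G, g ^ p = 1) {H : Subgroup G} (hH : Nat.card H = p ^ 2)
    (hHG : H ≠ ⊤) {U : Set (CharGp G)} (hU : resCharTop H '' U = Set.univ) :
    ∃ w ∉ H, resCharTop (Subgroup.zpowers w) '' U = Set.univ := by
  by_contra! homit
  have : Fintype G := Fintype.ofFinite G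
  obtain ⟨z, hz⟩ : ∃ z, z ∉ H := by simpa [Subgroup.eq_top_iff'] using hHG
  choose s hsU hs using fun ψ : CharGp H => hU.symm ▸ Set.mem_univ ψ
  have : Fintype (CharGp H) := Fintype.ofFinite _
  have hsz : ∀ ψ (y : H), s ψ (z * y) = s ψ z * ψ y := fun ψ y => by
    rw [map_mul, ← DFunLike.congr_fun (hs ψ) y]; rfl
  have hk : ∀ y : H, #(univ.image fun ψ => s ψ (z * y)) ≤ p - 1 := fun y => by
    have hzy : z * y ∉ H := fun h => hz (by simpa using H.mul_mem h (H.inv_mem y.2))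
    have hord : orderOf (z * y : G) ≤ p := orderOf_le_of_pow_eq_one hp.pos (hG _)
    have := card_image_apply_lt_orderOf hsU (homit _ hzy)
    omega
  have hc : ∀ ψ ψ' : CharGp H, ψ ≠ ψ' → #{y : H | s ψ' (z * y) = s ψ (z * y)} ≤ p := by
    intro ψ ψ' hne
    calc #{y : H | s ψ' (z * y) = s ψ (z * y)}
        ≤ #{y | (ψ' / ψ) y = s ψ z / s ψ' z} := card_le_card fun y hy => by
          simp only [mem_filter, mem_univ, true_and, hsz] at hy ⊢
          rw [MonoidHom.div_apply, div_eq_div_iff_mul_eq_mul, mul_comm, hy, mul_comm]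
      _ ≤ Nat.card (ψ' / ψ).ker := MonoidHom.card_fiber_le_card_ker _ _
      _ ≤ p ^ 1 := Subgroup.card_le_of_ne_top hp hH
          (mt MonoidHom.ker_eq_top_iff.1 (div_ne_one.2 hne.symm))
      _ = p := pow_one p
  have key := card_mul_card_sq_le_of_collisions (fun (y : H) ψ => s ψ (z * y)) hk hc
  rw [Fintype.card_eq_nat_card, Fintype.card_eq_nat_card,
    CommGroup.card_monoidHom_of_hasEnoughRootsOfUnity, hH] at key
  obtain ⟨q, rfl⟩ : ∃ q, p = q + 2 := ⟨p - 2, by have := hp.two_le; omega⟩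
  simp only [show q + 2 - 1 = q + 1 from rfl] at key
  nlinarith [pow_pos (show 0 < q + 2 by omega) 4]

/-- **Theorem (failure of the saturation conjecture in rank three).**
For every prime `p`, with `G = (ℤ/pℤ)³` and `H ≤ G` any subgroup of order `p²`,
the relation `(W',W) ∈ ℛ ↔ W' ≤ W ∧ (W' = W ∨ W ≤ H)` is a saturated transfer
system on `G` that is not realized by any `U ∈ 𝒰_G`. -/
theorem rank_three_unrealized (p : ℕ) (hp : p.Prime)
    (H : Subgroup (Multiplicative (ZMod p × ZMod p × ZMod p)))
    (hH : Nat.card H = p ^ 2) :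
    ∃ R : TransferSystem (Multiplicative (ZMod p × ZMod p × ZMod p)),
      (∀ W' W, R.rel W' W ↔ (W' ≤ W ∧ (W' = W ∨ W ≤ H))) ∧
      R.Saturated ∧
      ¬ ∃ U ∈ UnivSet (Multiplicative (ZMod p × ZMod p × ZMod p)),
          ∀ K K', R.rel K K' ↔ TrRel U K K' := by
  have : NeZero p := ⟨hp.ne_zero⟩
  refine ⟨TransferSystem.below H, fun _ _ => Iff.rfl, TransferSystem.below_saturated H, ?_⟩
  rintro ⟨U, ⟨hU1, -⟩, hTr⟩
  have hbot : ∀ K, resCharTop K '' U = Set.univ ↔ ⊥ = K ∨ K ≤ H := fun K => by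
    rw [← trRel_bot_iff hU1, ← hTr]
    exact and_iff_right bot_le
  have hpow : ∀ g : Multiplicative (ZMod p × ZMod p × ZMod p), g ^ p = 1 := fun g => by
    simp [← toAdd_eq_zero, Prod.ext_iff]
  have hHG : H ≠ ⊤ := fun hH_top => by
    have hcard := hH_top ▸ hH
    rw [Subgroup.card_top, Nat.card_congr Multiplicative.toAdd, Nat.card_prod, Nat.card_prod,
      Nat.card_zmod, ← pow_two, ← pow_succ'] at hcard
    exact absurd (Nat.pow_right_injective hp.two_le hcard) (by norm_num)
  obtain ⟨w, hw, hsurj⟩ :=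
    exists_zpowers_resCharTop_image_eq_univ hp hpow hH hHG ((hbot H).2 (Or.inr le_rfl))
  rcases (hbot _).1 hsurj with hbot_eq | hle
  · have hw1 : w = 1 := Subgroup.mem_bot.1 (hbot_eq ▸ Subgroup.mem_zpowers w)
    exact hw (hw1 ▸ H.one_mem)
  · exact hw (hle (Subgroup.mem_zpowers w))
end

section
/- Let ℛ and ℛ' be transfer systems on a finite group G, with ℛ' saturated. Then ℛ ⊆ ℛ' if and only if every ℛ'-cofibrant subgroup of G is ℛ-cofibrant. -/
open scoped Classical

namespace TransferSystem

variable {G : Type*} [Group G]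

theorem Saturated.rel_of_rel_inf {R : TransferSystem G} (hR : R.Saturated)
    {K L H : Subgroup G} (hKH : K ≤ H) (hLH : R.rel L H) (hKL : R.rel (K ⊓ L) L) :
    R.rel K H :=
  hR (R.trans hKL hLH) inf_le_left hKH

theorem Cofibrant.of_rel_subset {R R' : TransferSystem G}
    (hsub : ∀ K H : Subgroup G, R.rel K H → R'.rel K H) {H : Subgroup G}
    (hH : R'.Cofibrant H) : R.Cofibrant H :=
  fun ⟨K, hKH, hrel⟩ => hH ⟨K, hKH, hsub K H hrel⟩

theorem rel_subset_of_cofibrant [WellFoundedLT (Subgroup G)] {R R' : TransferSystem G}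
    (hR' : R'.Saturated)
    (hcof : ∀ H : Subgroup G, R'.Cofibrant H → R.Cofibrant H) :
    ∀ K H : Subgroup G, R.rel K H → R'.rel K H := by
  intro K H
  induction H using WellFoundedLT.induction generalizing K with
  | ind H ih =>
    intro hKH
    obtain hlt | rfl := (R.le_of_rel hKH).lt_or_eq
    · have hH : ¬ R'.Cofibrant H := fun hc => hcof H hc ⟨K, hlt, hKH⟩
      obtain ⟨L, hLH, hL⟩ := not_not.mp hH
      exact hR'.rel_of_rel_inf hlt.le hL (ih L hLH _ (R.inf_rel L hKH hLH.le))
    · exact R'.refl K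

end TransferSystem

/-- **Lemma (cofibrant subgroups determine a saturated transfer system).**
Let `ℛ, ℛ'` be transfer systems on a finite group `G` with `ℛ'` saturated. Then
`ℛ ⊆ ℛ'` iff every `ℛ'`-cofibrant subgroup is `ℛ`-cofibrant. -/
theorem subset_iff_cofibrant (G : Type*) [Group G] [Finite G]
    (R R' : TransferSystem G) (hR' : R'.Saturated) :
    (∀ K H : Subgroup G, R.rel K H → R'.rel K H) ↔
      (∀ H : Subgroup G, R'.Cofibrant H → R.Cofibrant H) :=
  ⟨fun hsub _ => TransferSystem.Cofibrant.of_rel_subset hsub,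
    TransferSystem.rel_subset_of_cofibrant hR'⟩
end

section
/- Let G be a finite abelian group and ℛ a saturated transfer system on G. Suppose there exist a sub-inductor J on G and an R-stable diagram D on G such that every D(H) is closed under complex conjugation and, for every ℛ-cofibrant subgroup H ≤ G and every proper subgroup K < H, I_K^H(D(K)) is not contained in D(H) ∪ Res_J(H). Then there exists U ∈ 𝒰_G with Tr(U) = ℛ. -/
open scoped Classical

/-- The sub-inductor axioms for a family `J_K^H : 𝒫(K̂) → 𝒫(Ĥ)`. -/
structure IsSubInductor {G : Type*} [CommGroup G]
    (J : ∀ K H : Subgroup G, K ≤ H → Set (CharGp K) → Set (CharGp H)) : Prop where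
  conj_comm : ∀ {K H : Subgroup G} (h : K ≤ H) (U : Set (CharGp K)),
    J K H h (charConj '' U) = charConj '' J K H h U
  union_comm : ∀ {K H : Subgroup G} (h : K ≤ H) (s : Set (Set (CharGp K))),
    J K H h (⋃₀ s) = ⋃ U ∈ s, J K H h U
  comp : ∀ {K L H : Subgroup G} (h1 : K ≤ L) (h2 : L ≤ H) (U : Set (CharGp K)),
    J L H h2 (J K L h1 U) = J K H (h1.trans h2) U
  res_cover : ∀ {K H : Subgroup G} (h : K ≤ H) (U : Set (CharGp K)),
    resChar h '' J K H h U = U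
  res_le : ∀ {K L H : Subgroup G} (hK : K ≤ H) (hL : L ≤ H) (U : Set (CharGp L)),
    resChar hK '' J L H hL U ⊆
      J (K ⊓ L) K inf_le_left (resChar (inf_le_right : K ⊓ L ≤ L) '' U)
  one_mem : ∀ {K H : Subgroup G} (h : K ≤ H), (1 : CharGp H) ∈ J K H h {1}

/-- The residue of a sub-inductor: `Res_J(H) = ⋃_{K < H} J_K^H(K̂)`. -/
def resJ {G : Type*} [CommGroup G]
    (J : ∀ K H : Subgroup G, K ≤ H → Set (CharGp K) → Set (CharGp H))
    (H : Subgroup G) : Set (CharGp H) :=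
  ⋃ (K : Subgroup G) (h : K < H), J K H h.le Set.univ

/-- A diagram is `R`-stable if `R_K^H(D(H)) ⊆ D(K)` for all `K ≤ H`. -/
def RStable {G : Type*} [CommGroup G] (D : ∀ H : Subgroup G, Set (CharGp H)) : Prop :=
  ∀ {K H : Subgroup G} (h : K ≤ H), resChar h '' D H ⊆ D K

/-- A tight pair: an `R`-stable conjugation-invariant diagram together with a
sub-inductor satisfying the two non-containment constraints. -/
structure IsTightPair {G : Type*} [CommGroup G]
    (D : ∀ H : Subgroup G, Set (CharGp H))
    (J : ∀ K H : Subgroup G, K ≤ H → Set (CharGp K) → Set (CharGp H)) : Prop where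
  rstable : RStable D
  subind : IsSubInductor J
  conj_inv : ∀ H : Subgroup G, ∀ χ ∈ D H, charConj χ ∈ D H
  ind_not_le : ∀ {K H : Subgroup G} (h : K < H),
    ¬ (resChar h.le ⁻¹' D K ⊆ D H ∪ resJ J H)
  not_res : ∀ H : Subgroup G, ¬ (D H ⊆ resJ J H)

/-!
Let `base H` be the smallest `K` with `(K, H) ∈ ℛ`; for saturated `ℛ`, `(K, H) ∈ ℛ` iff
`base H ≤ K ≤ H`. By well-founded recursion build, on every subgroup `C`, the set `F(C)`
(`indDiagram`) of characters generated from `{1} ∪ D(C)` by the inductions `J_K^C` of `F(base K)`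
from the proper subgroups `K < C`, and let `E(K)` (`cofDiagram`) be the characters of `K` whose restrictions to all
cofibrant subgroups lie in `F`. Sub-inductor axiom (4) and `R`-stability make `F` stable under
restriction to cofibrant subgroups, and axiom (3) together with gluing of characters on the abelian
group `G` shows that `E(K)` is exactly the restriction to `K` of `U := E(G)` (`realizingSet`). Thus
`Tr(U)` consists of the `(K, H)` with `I_K^H(E(K)) ⊆ E(H)`: this holds when `base H ≤ K`, and
otherwise a character witnessing the hypothesis at the cofibrant pair `base K < base H` violates it,
because `F(C) ⊆ D(C) ∪ Res_J(C)` for `C ≠ ⊥`.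
-/

section Characters

variable {G : Type*} [Group G]

@[simp] lemma resChar_resChar {K L H : Subgroup G} (h₁ : K ≤ L) (h₂ : L ≤ H) (χ : CharGp H) :
    resChar h₁ (resChar h₂ χ) = resChar (h₁.trans h₂) χ := rfl

@[simp] lemma resChar_rfl {K : Subgroup G} (χ : CharGp K) : resChar le_rfl χ = χ := rfl

@[simp] lemma resChar_resCharTop {K H : Subgroup G} (h : K ≤ H) (χ : CharGp G) :
    resChar h (resCharTop H χ) = resCharTop K χ := rfl

@[simp] lemma resChar_one {K H : Subgroup G} (h : K ≤ H) : resChar h (1 : CharGp H) = 1 := rfl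

@[simp] lemma resCharTop_one (K : Subgroup G) : resCharTop K (1 : CharGp G) = 1 := rfl

@[simp] lemma charConj_one : charConj (1 : CharGp G) = 1 := by
  ext; simp [charConj]

lemma resChar_charConj {K H : Subgroup G} (h : K ≤ H) (χ : CharGp H) :
    resChar h (charConj χ) = charConj (resChar h χ) := rfl

lemma resCharTop_charConj (K : Subgroup G) (χ : CharGp G) :
    resCharTop K (charConj χ) = charConj (resCharTop K χ) := rfl

end Characters

section Extension

lemma Complex.units_zpow_surjective {n : ℤ} (hn : n ≠ 0) :
    Function.Surjective fun z : ℂˣ => z ^ n := fun x =>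
  ⟨Units.mk0 (Complex.exp (Complex.log x / n)) (Complex.exp_ne_zero _), by
    ext
    simp [← Complex.exp_int_mul, mul_div_cancel₀ _ (Int.cast_ne_zero.2 hn : (n : ℂ) ≠ 0),
      Complex.exp_log x.ne_zero]⟩

noncomputable instance : DivisibleBy (Additive ℂˣ) ℤ :=
  divisibleByOfSMulRightSurj _ _ fun hn x =>
    let ⟨y, hy⟩ := Complex.units_zpow_surjective hn x.toMul
    ⟨.ofMul y, congrArg Additive.ofMul hy⟩

variable {A B M : Type*} [CommGroup A] [CommGroup B] [CommGroup M] [DivisibleBy (Additive M) ℤ]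

theorem MonoidHom.exists_comp_eq_of_injective {f : A →* B} (hf : Function.Injective f)
    (χ : A →* M) : ∃ ψ : B →* M, ψ.comp f = χ := by
  obtain ⟨ψ, hψ⟩ := (Module.Baer.of_divisible (Additive M)).extension_property_addMonoidHom
    f.toAdditive hf χ.toAdditive
  exact ⟨toAdditive.symm ψ, ext fun x => congrArg Additive.toMul (DFunLike.congr_fun hψ x)⟩

theorem MonoidHom.exists_comp_eq_of_ker_le (f : A →* B) {χ : A →* M} (h : f.ker ≤ χ.ker) :
    ∃ ψ : B →* M, ψ.comp f = χ := by
  let χ₀ : f.range →* M :=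
    f.rangeRestrict.liftOfSurjective f.rangeRestrict_surjective ⟨χ, by rwa [ker_rangeRestrict]⟩
  obtain ⟨ψ, hψ⟩ := exists_comp_eq_of_injective f.range.subtype_injective χ₀
  refine ⟨ψ, ?_⟩
  rw [← f.subtype_comp_rangeRestrict, ← comp_assoc, hψ]
  exact f.rangeRestrict.liftOfRightInverse_comp _ _ _

variable {G : Type*} [CommGroup G]

theorem resChar_surjective {K H : Subgroup G} (h : K ≤ H) : Function.Surjective (resChar h) :=
  fun χ => MonoidHom.exists_comp_eq_of_injective (Subgroup.inclusion_injective h) χ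

theorem exists_resCharTop_eq_of_agree (K N : Subgroup G) (χ : CharGp K) (ψ : CharGp N)
    (hagree : ∀ x (hK : x ∈ K) (hN : x ∈ N), χ ⟨x, hK⟩ = ψ ⟨x, hN⟩) :
    ∃ θ : CharGp G, resCharTop K θ = χ ∧ resCharTop N θ = ψ := by
  let μ : K × N →* G := K.subtype.coprod N.subtype
  have hker : μ.ker ≤ (χ.coprod ψ).ker := by
    rintro ⟨a, b⟩ hab
    have hba : (b : G) = (a : G)⁻¹ := eq_inv_of_mul_eq_one_right hab
    have haN : (a : G) ∈ N := inv_inv (a : G) ▸ N.inv_mem (hba ▸ b.2)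
    have hb : b = (⟨a, haN⟩ : N)⁻¹ := Subtype.ext hba
    simp [MonoidHom.mem_ker, hb, hagree a a.2 haN]
  obtain ⟨θ, hθ⟩ := μ.exists_comp_eq_of_ker_le hker
  refine ⟨θ, ?_, ?_⟩
  · rw [← MonoidHom.coprod_comp_inl χ ψ, ← hθ]; ext; simp [resCharTop, μ]
  · rw [← MonoidHom.coprod_comp_inr χ ψ, ← hθ]; ext; simp [resCharTop, μ]

end Extension

namespace TransferSystem

variable {G : Type*} [Group G] [Finite G] (R : TransferSystem G)

noncomputable def base (H : Subgroup G) : Subgroup G :=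
  wellFounded_lt.min {K | R.rel K H} ⟨H, R.refl H⟩

lemma rel_base (H : Subgroup G) : R.rel (R.base H) H :=
  wellFounded_lt.min_mem {K | R.rel K H} ⟨H, R.refl H⟩

lemma base_le (H : Subgroup G) : R.base H ≤ H := R.le_of_rel (R.rel_base H)

lemma base_le_of_rel {K H : Subgroup G} (h : R.rel K H) : R.base H ≤ K := by
  have hinf : R.rel (R.base H ⊓ K) H := R.trans (R.inf_rel K (R.rel_base H) (R.le_of_rel h)) h
  have : R.base H ⊓ K = R.base H :=
    (inf_le_left.lt_or_eq).resolve_left (wellFounded_lt.not_lt_min {K | R.rel K H} hinf)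
  exact this ▸ inf_le_right

lemma base_mono {K H : Subgroup G} (h : K ≤ H) : R.base K ≤ R.base H :=
  (R.base_le_of_rel (R.inf_rel K (R.rel_base H) h)).trans inf_le_left

lemma cofibrant_base (H : Subgroup G) : R.Cofibrant (R.base H) := by
  rintro ⟨K, hK, hrel⟩
  exact (R.base_le_of_rel (R.trans hrel (R.rel_base H))).not_gt hK

lemma base_eq_of_cofibrant {B : Subgroup G} (hB : R.Cofibrant B) : R.base B = B :=
  (R.base_le B).eq_of_not_lt fun hlt => hB ⟨_, hlt, R.rel_base B⟩

lemma le_base_of_cofibrant {B H : Subgroup G} (hB : R.Cofibrant B) (h : B ≤ H) :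
    B ≤ R.base H :=
  R.base_eq_of_cofibrant hB ▸ R.base_mono h

lemma Saturated.rel_iff {R : TransferSystem G} (hR : R.Saturated) {K H : Subgroup G} :
    R.rel K H ↔ R.base H ≤ K ∧ K ≤ H :=
  ⟨fun h => ⟨R.base_le_of_rel h, R.le_of_rel h⟩, fun ⟨h₁, h₂⟩ => hR (R.rel_base H) h₁ h₂⟩

end TransferSystem

section SubInductor

variable {G : Type*} [CommGroup G]
  {J : ∀ K H : Subgroup G, K ≤ H → Set (CharGp K) → Set (CharGp H)}

lemma IsSubInductor.mono (hJ : IsSubInductor J) {K H : Subgroup G} (h : K ≤ H) :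
    Monotone (J K H h) := fun U V hUV => by
  have := hJ.union_comm h {U, V}
  rw [Set.sUnion_pair, Set.union_eq_self_of_subset_left hUV, Set.biUnion_pair] at this
  exact this ▸ Set.subset_union_left

lemma IsSubInductor.one_mem_resJ (hJ : IsSubInductor J) {C : Subgroup G} (hC : ⊥ < C) :
    (1 : CharGp C) ∈ resJ J C :=
  Set.mem_iUnion₂.2 ⟨⊥, hC, hJ.mono hC.le (Set.subset_univ _) (hJ.one_mem hC.le)⟩

end SubInductor

section Realization

variable {G : Type*} [CommGroup G] [Finite G] (R : TransferSystem G)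
  (J : ∀ K H : Subgroup G, K ≤ H → Set (CharGp K) → Set (CharGp H))
  (D : ∀ H : Subgroup G, Set (CharGp H))

noncomputable def indDiagram : ∀ C : Subgroup G, Set (CharGp C) :=
  wellFounded_lt.fix fun C F => {1} ∪ D C ∪ ⋃ (K : Subgroup G) (h : K < C),
    J K C h.le (resChar (R.base_le K) ⁻¹' F (R.base K) ((R.base_le K).trans_lt h))

lemma indDiagram_eq (C : Subgroup G) : indDiagram R J D C = {1} ∪ D C ∪
    ⋃ (K : Subgroup G) (h : K < C),
      J K C h.le (resChar (R.base_le K) ⁻¹' indDiagram R J D (R.base K)) :=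
  wellFounded_lt.fix_eq _ C

def cofDiagram (K : Subgroup G) : Set (CharGp K) :=
  {ξ | ∀ (B : Subgroup G) (hB : B ≤ K), R.Cofibrant B → resChar hB ξ ∈ indDiagram R J D B}

def realizingSet : Set (CharGp G) :=
  {χ | ∀ B : Subgroup G, R.Cofibrant B → resCharTop B χ ∈ indDiagram R J D B}

variable {R J D}

lemma one_mem_indDiagram (C : Subgroup G) : (1 : CharGp C) ∈ indDiagram R J D C := by
  rw [indDiagram_eq]; exact .inl (.inl rfl)

lemma subset_indDiagram (C : Subgroup G) : D C ⊆ indDiagram R J D C := by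
  rw [indDiagram_eq]; exact fun _ hχ => .inl (.inr hχ)

lemma induce_subset_indDiagram {K C : Subgroup G} (h : K < C) :
    J K C h.le (resChar (R.base_le K) ⁻¹' indDiagram R J D (R.base K)) ⊆ indDiagram R J D C := by
  rw [indDiagram_eq R J D C]; exact fun _ hχ => .inr (Set.mem_iUnion₂.2 ⟨K, h, hχ⟩)

lemma indDiagram_subset (hJ : IsSubInductor J) {C : Subgroup G} (hC : ⊥ < C) :
    indDiagram R J D C ⊆ D C ∪ resJ J C := by
  rw [indDiagram_eq]
  rintro χ ((rfl | hχ) | hχ)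
  · exact .inr (hJ.one_mem_resJ hC)
  · exact .inl hχ
  · obtain ⟨K, hK, hχ⟩ := Set.mem_iUnion₂.1 hχ
    exact .inr (Set.mem_iUnion₂.2 ⟨K, hK, hJ.mono hK.le (Set.subset_univ _) hχ⟩)

lemma charConj_mem_indDiagram (hJ : IsSubInductor J)
    (hconj : ∀ H : Subgroup G, ∀ χ ∈ D H, charConj χ ∈ D H) {C : Subgroup G} {χ : CharGp C}
    (hχ : χ ∈ indDiagram R J D C) : charConj χ ∈ indDiagram R J D C := by
  induction C using WellFoundedLT.induction with | _ C ih
  rw [indDiagram_eq] at hχ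
  rcases hχ with (rfl | hχ) | hχ
  · simpa using one_mem_indDiagram C
  · exact subset_indDiagram C (hconj C χ hχ)
  · obtain ⟨K, hK, hχ⟩ := Set.mem_iUnion₂.1 hχ
    have hχ' := hJ.conj_comm hK.le _ ▸ Set.mem_image_of_mem charConj hχ
    refine induce_subset_indDiagram hK (hJ.mono hK.le ?_ hχ')
    rintro _ ⟨ξ, hξ, rfl⟩
    simpa only [Set.mem_preimage, resChar_charConj] using
      ih _ ((R.base_le K).trans_lt hK) hξ

lemma resChar_mem_indDiagram (hJ : IsSubInductor J) (hD : RStable D) {B C : Subgroup G}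
    (hB : R.Cofibrant B) (hBC : B ≤ C) {χ : CharGp C} (hχ : χ ∈ indDiagram R J D C) :
    resChar hBC χ ∈ indDiagram R J D B := by
  induction C using WellFoundedLT.induction generalizing B with | _ C ih
  rw [indDiagram_eq] at hχ
  rcases hχ with (rfl | hχ) | hχ
  · simpa using one_mem_indDiagram B
  · exact subset_indDiagram B (hD hBC ⟨χ, hχ, rfl⟩)
  · obtain ⟨K, hK, hχ⟩ := Set.mem_iUnion₂.1 hχ
    have hbase : R.base K < C := (R.base_le K).trans_lt hK
    by_cases hBK : B ≤ K
    · have hχK : resChar hK.le χ ∈ resChar (R.base_le K) ⁻¹' indDiagram R J D (R.base K) :=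
        hJ.res_cover hK.le (resChar (R.base_le K) ⁻¹' _) ▸ ⟨χ, hχ, rfl⟩
      simpa using ih _ hbase hB (R.le_base_of_cofibrant hB hBK) hχK
    · -- axiom (4) moves `χ|_B` into the induction from `B ⊓ K < B`
      refine induce_subset_indDiagram (inf_lt_left.2 hBK)
        (hJ.mono _ ?_ (hJ.res_le hBC hK.le _ ⟨χ, hχ, rfl⟩))
      rintro _ ⟨ξ, hξ, rfl⟩
      simpa using ih _ hbase (R.cofibrant_base _) (R.base_mono inf_le_right) hξ

lemma exists_mem_indDiagram_resChar_eq (hJ : IsSubInductor J) {K C : Subgroup G}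
    (hC : R.Cofibrant C) (hKC : K ≤ C) {ξ : CharGp K} (hξ : ξ ∈ cofDiagram R J D K) :
    ∃ χ ∈ indDiagram R J D C, resChar hKC χ = ξ := by
  rcases hKC.lt_or_eq with hlt | rfl
  · have hξ' : ξ ∈ resChar (R.base_le K) ⁻¹' indDiagram R J D (R.base K) :=
      hξ _ _ (R.cofibrant_base K)
    rw [← hJ.res_cover hlt.le (resChar (R.base_le K) ⁻¹' _)] at hξ'
    obtain ⟨χ, hχ, rfl⟩ := hξ'
    exact ⟨χ, induce_subset_indDiagram hlt hχ, rfl⟩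
  · exact ⟨ξ, by simpa using hξ K le_rfl hC, rfl⟩

lemma resCharTop_image_realizingSet (hJ : IsSubInductor J) (hD : RStable D) (K : Subgroup G) :
    resCharTop K '' realizingSet R J D = cofDiagram R J D K := by
  refine subset_antisymm ?_ fun ξ hξ => ?_
  · rintro _ ⟨χ, hχ, rfl⟩ B hBK hB
    simpa using hχ B hB
  set N := R.base ⊤
  obtain ⟨ψ, hψ, hψξ⟩ := exists_mem_indDiagram_resChar_eq hJ (R.cofibrant_base ⊤)
    (inf_le_right : K ⊓ N ≤ N) (ξ := resChar inf_le_left ξ)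
    fun B hB hBc => by simpa using hξ B (hB.trans inf_le_left) hBc
  obtain ⟨θ, hθK, hθN⟩ := exists_resCharTop_eq_of_agree K N ξ ψ
    fun x hK hN => (DFunLike.congr_fun hψξ ⟨x, hK, hN⟩).symm
  refine ⟨θ, fun B hB => ?_, hθK⟩
  have hBN : B ≤ N := R.le_base_of_cofibrant hB le_top
  rw [← resChar_resCharTop hBN, hθN]
  exact resChar_mem_indDiagram hJ hD hB hBN hψ

lemma mem_cofDiagram_of_rel {K H : Subgroup G} (hrel : R.rel K H) {χ : CharGp H}
    (hχ : resChar (R.le_of_rel hrel) χ ∈ cofDiagram R J D K) : χ ∈ cofDiagram R J D H :=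
  fun B hBH hB => by
    simpa using hχ B ((R.le_base_of_cofibrant hB hBH).trans (R.base_le_of_rel hrel)) hB

lemma exists_not_mem_cofDiagram (hJ : IsSubInductor J) (hD : RStable D)
    (hmain : ∀ H : Subgroup G, R.Cofibrant H → ∀ (K : Subgroup G) (hK : K < H),
      ¬ (resChar hK.le ⁻¹' D K ⊆ D H ∪ resJ J H))
    {K H : Subgroup G} (hKH : K ≤ H) (hbase : ¬ R.base H ≤ K) :
    ∃ χ : CharGp H, resChar hKH χ ∈ cofDiagram R J D K ∧ χ ∉ cofDiagram R J D H := by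
  have hlt : R.base K < R.base H :=
    (R.base_mono hKH).lt_of_ne fun h => hbase (h ▸ R.base_le K)
  obtain ⟨χ₀, hχ₀K, hχ₀H⟩ := Set.not_subset.1 (hmain _ (R.cofibrant_base H) _ hlt)
  obtain ⟨χ, rfl⟩ := resChar_surjective (R.base_le H) χ₀
  refine ⟨χ, fun B hBK hB => ?_, fun hχ => ?_⟩
  · have hBbase := R.le_base_of_cofibrant hB hBK
    simpa using subset_indDiagram B (hD hBbase ⟨_, hχ₀K, rfl⟩)
  · exact hχ₀H (indDiagram_subset hJ (bot_le.trans_lt hlt)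
      (hχ _ (R.base_le H) (R.cofibrant_base H)))

end Realization

/-- **Main theorem on realizing saturated transfer systems.**
Let `G` be a finite abelian group and `ℛ` a saturated transfer system on `G`.
Suppose there exist a sub-inductor `J` and an `R`-stable diagram `D`, each `D(H)`
closed under conjugation, such that for every `ℛ`-cofibrant `H` and every `K < H`,
`I_K^H(D(K)) ⊄ D(H) ∪ Res_J(H)`. Then some `U ∈ 𝒰_G` has `Tr(U) = ℛ`. -/
theorem main_realization (G : Type*) [CommGroup G] [Fintype G]
    (R : TransferSystem G) (hR : R.Saturated)
    (J : ∀ K H : Subgroup G, K ≤ H → Set (CharGp K) → Set (CharGp H))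
    (hJ : IsSubInductor J)
    (D : ∀ H : Subgroup G, Set (CharGp H)) (hD : RStable D)
    (hconj : ∀ H : Subgroup G, ∀ χ ∈ D H, charConj χ ∈ D H)
    (hmain : ∀ H : Subgroup G, R.Cofibrant H → ∀ (K : Subgroup G) (hK : K < H),
      ¬ (resChar hK.le ⁻¹' D K ⊆ D H ∪ resJ J H)) :
    ∃ U ∈ UnivSet G, ∀ K H : Subgroup G, R.rel K H ↔ TrRel U K H := by
  refine ⟨realizingSet R J D, ⟨fun B _ => by simpa using one_mem_indDiagram B, fun χ hχ B hB => ?_⟩,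
    fun K H => ?_⟩
  · rw [resCharTop_charConj]
    exact charConj_mem_indDiagram hJ hconj (hχ B hB)
  simp only [TrRel, resCharTop_image_realizingSet hJ hD]
  constructor
  · exact fun hrel => ⟨R.le_of_rel hrel, fun χ => mem_cofDiagram_of_rel hrel⟩
  · rintro ⟨hKH, hsub⟩
    refine hR.rel_iff.2 ⟨by_contra fun hbase => ?_, hKH⟩
    obtain ⟨χ, hχK, hχH⟩ := exists_not_mem_cofDiagram hJ hD hmain hKH hbase
    exact hχH (hsub hχK)
end

section
/- Let G be a finite abelian group, D an R-stable diagram on G, J a sub-inductor on G, and ℛ a transfer system on G. Then the (J,ℛ)-stabilization ⟨D⟩_J^ℛ, defined by ⟨D⟩_J^ℛ(H) = ⋃_{(K,H) ∈ ℛ} J_K^H(D(K)), is again R-stable. -/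
open scoped Classical

/-- **Lemma.** The `(J,ℛ)`-stabilization `⟨D⟩_J^ℛ(H) = ⋃_{(K,H) ∈ ℛ} J_K^H(D(K))`
of an `R`-stable diagram `D` is again `R`-stable. -/
theorem stabilization_rstable (G : Type*) [CommGroup G] [Fintype G]
    (D : ∀ H : Subgroup G, Set (CharGp H)) (hD : RStable D)
    (J : ∀ K H : Subgroup G, K ≤ H → Set (CharGp K) → Set (CharGp H))
    (hJ : IsSubInductor J) (R : TransferSystem G) :
    RStable (fun H => ⋃ (K : Subgroup G) (h : R.rel K H), J K H (R.le_of_rel h) (D K)) := by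
  have mono : ∀ {A B : Subgroup G} (h : A ≤ B) {U V : Set (CharGp A)}, U ⊆ V →
      J A B h U ⊆ J A B h V := by
    intro A B h U V hUV
    have : J A B h (⋃₀ {U, V}) = ⋃ W ∈ ({U, V} : Set (Set (CharGp A))), J A B h W :=
      hJ.union_comm h {U, V}
    have hV : ⋃₀ ({U, V} : Set (Set (CharGp A))) = V := by
      rw [Set.sUnion_pair, Set.union_eq_self_of_subset_left hUV]
    rw [hV] at this
    rw [this]
    exact Set.subset_biUnion_of_mem (Set.mem_insert U {V})
  intro K H h
  rintro ψ ⟨χ, hχ, rfl⟩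
  simp only [Set.mem_iUnion] at hχ ⊢
  obtain ⟨L, hLH, hχ⟩ := hχ
  refine ⟨K ⊓ L, ?_, ?_⟩
  · have := R.inf_rel K hLH h
    rwa [inf_comm] at this
  · have h1 : resChar h (χ) ∈ J (K ⊓ L) K inf_le_left
        (resChar (inf_le_right : K ⊓ L ≤ L) '' D L) :=
      hJ.res_le h (R.le_of_rel hLH) (D L) ⟨χ, hχ, rfl⟩
    exact mono _ (hD inf_le_right) h1
end

section
/- Let G and G' be finite abelian groups with gcd(|G|,|G'|) = 1, equipped with tight pairs (D,J) and (D',J') respectively. Then (D ⊗ D', J ⊗ J') is a tight pair on G × G', where (D ⊗ D')(H × H') = D(H) ⊗ D'(H') = {χ ⊗ χ' : χ ∈ D(H), χ' ∈ D'(H')}. -/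
open scoped Classical

/-- The tensor (external product) of characters of subgroups: `χ ⊗ χ'` is the
character of `H × H'` given by `(h,h') ↦ χ(h)·χ'(h')`. -/
def charTensor {G G' : Type*} [CommGroup G] [CommGroup G']
    {H : Subgroup G} {H' : Subgroup G'} (χ : CharGp H) (χ' : CharGp H') :
    CharGp (H.prod H') :=
  ((χ.comp (MonoidHom.fst H H')) * (χ'.comp (MonoidHom.snd H H'))).comp
    (Subgroup.prodEquiv H H').toMonoidHom


/-! Coprimality makes every subgroup of `G × G'` a product `H × H'`: a suitable power of
`(a, b)` is `(a, 1)`. Every character of `H × H'` is uniquely `χ ⊗ χ'`, so each axiom of a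
sub-inductor for `J ⊗ J'` splits into the corresponding axioms for `J` and `J'`. The residue
of `J ⊗ J'` at `H × H'` consists of the `χ ⊗ χ'` with `χ` in the residue of `J` at `H` or
`χ'` in that of `J'` at `H'`; hence witnesses `χ`, `χ'` of the two non-containment conditions
for `K ≤ H` and `K' ≤ H'` tensor to a witness for `K × K' ≤ H × H'`. -/

section Characters

variable {M : Type*} [Group M]

@[simp]
lemma charConj_charConj (χ : CharGp M) : charConj (charConj χ) = χ := by
  ext x
  simp [charConj]

lemma mem_charConj_image {S : Set (CharGp M)} {χ : CharGp M} :
    χ ∈ charConj '' S ↔ charConj χ ∈ S :=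
  Set.mem_image_iff_of_inverse charConj_charConj charConj_charConj

@[simp]
lemma resChar_refl {H : Subgroup M} (h : H ≤ H) : resChar h = id := rfl

end Characters

section CharTensor

variable {G G' : Type*} [CommGroup G] [CommGroup G'] {H K : Subgroup G} {H' K' : Subgroup G'}

lemma charTensor_eq_coprod_comp (χ : CharGp H) (χ' : CharGp H') :
    charTensor χ χ' = (χ.coprod χ').comp (Subgroup.prodEquiv H H').toMonoidHom := rfl

lemma charTensor_inj {χ ψ : CharGp H} {χ' ψ' : CharGp H'} :
    charTensor χ χ' = charTensor ψ ψ' ↔ χ = ψ ∧ χ' = ψ' := by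
  refine ⟨fun h => ?_, fun ⟨h, h'⟩ => h ▸ h' ▸ rfl⟩
  rw [charTensor_eq_coprod_comp, charTensor_eq_coprod_comp,
    MonoidHom.cancel_right (Subgroup.prodEquiv H H').surjective] at h
  exact ⟨by simpa using congrArg (·.comp (MonoidHom.inl _ _)) h,
    by simpa using congrArg (·.comp (MonoidHom.inr _ _)) h⟩

lemma exists_charTensor_eq (ξ : CharGp (H.prod H')) : ∃ χ χ', charTensor χ χ' = ξ := by
  set ζ := ξ.comp (Subgroup.prodEquiv H H').symm.toMonoidHom
  refine ⟨ζ.comp (MonoidHom.inl _ _), ζ.comp (MonoidHom.inr _ _), ?_⟩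
  rw [charTensor_eq_coprod_comp, MonoidHom.coprod_unique]
  ext x
  simp [ζ]

@[simp]
lemma charTensor_one : charTensor (1 : CharGp H) (1 : CharGp H') = 1 := by
  ext x
  simp [charTensor]

lemma charConj_charTensor (χ : CharGp H) (χ' : CharGp H') :
    charConj (charTensor χ χ') = charTensor (charConj χ) (charConj χ') := by
  ext x
  simp [charTensor, charConj]

lemma resChar_charTensor (hK : K ≤ H) (hK' : K' ≤ H') (h : K.prod K' ≤ H.prod H')
    (χ : CharGp H) (χ' : CharGp H') :
    resChar h (charTensor χ χ') = charTensor (resChar hK χ) (resChar hK' χ') := rfl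

end CharTensor

namespace Subgroup

variable {G G' : Type*} [Group G] [Group G'] {H A : Subgroup G} {H' B : Subgroup G'}

lemma prod_le_prod_iff : H.prod H' ≤ A.prod B ↔ H ≤ A ∧ H' ≤ B :=
  ⟨fun h => ⟨fun a ha => (h (show (a, 1) ∈ H.prod H' from ⟨ha, one_mem _⟩)).1,
    fun b hb => (h (show (1, b) ∈ H.prod H' from ⟨one_mem _, hb⟩)).2⟩,
   fun h => prod_mono h.1 h.2⟩

lemma prod_inj : H.prod H' = A.prod B ↔ H = A ∧ H' = B := by
  simp only [le_antisymm_iff, prod_le_prod_iff]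
  tauto

lemma prod_lt_prod_iff :
    H.prod H' < A.prod B ↔ H ≤ A ∧ H' ≤ B ∧ (H ≠ A ∨ H' ≠ B) := by
  rw [lt_iff_le_and_ne, prod_le_prod_iff, Ne, prod_inj]
  tauto

lemma prod_inf_prod : H.prod H' ⊓ A.prod B = (H ⊓ A).prod (H' ⊓ B) := by
  ext
  simp only [mem_inf, mem_prod]
  tauto

lemma mk_one_mem_of_mem (hcop : (Nat.card G).Coprime (Nat.card G')) {W : Subgroup (G × G')}
    {a : G} {b : G'} (h : (a, b) ∈ W) : (a, 1) ∈ W := by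
  obtain ⟨u, v, huv⟩ := Nat.isCoprime_iff_coprime.mpr hcop
  -- `v * |G'|` is `1` modulo `|G|` and `0` modulo `|G'|`
  have hpow : (a, b) ^ (v * Nat.card G') = (a, 1) := by
    have ha : a ^ (u * Nat.card G) = 1 := by
      rw [mul_comm, zpow_mul, zpow_natCast, pow_card_eq_one', one_zpow]
    have hb : b ^ (v * Nat.card G') = 1 := by
      rw [mul_comm, zpow_mul, zpow_natCast, pow_card_eq_one', one_zpow]
    ext
    · show a ^ (v * Nat.card G') = a
      rw [← one_mul (a ^ _), ← ha, ← zpow_add, huv, zpow_one]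
    · exact hb
  exact hpow ▸ zpow_mem h _

lemma one_mk_mem_of_mem (hcop : (Nat.card G).Coprime (Nat.card G')) {W : Subgroup (G × G')}
    {a : G} {b : G'} (h : (a, b) ∈ W) : (1, b) ∈ W := by
  simpa using mul_mem (inv_mem (mk_one_mem_of_mem hcop h)) h

lemma exists_eq_prod_of_coprime (hcop : (Nat.card G).Coprime (Nat.card G'))
    (W : Subgroup (G × G')) : ∃ (A : Subgroup G) (B : Subgroup G'), W = A.prod B := by
  refine ⟨W.map (MonoidHom.fst G G'), W.map (MonoidHom.snd G G'), le_antisymm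
    (le_prod_iff.mpr ⟨le_rfl, le_rfl⟩) ?_⟩
  rintro ⟨a, b⟩ ⟨⟨⟨a, b'⟩, ha, rfl⟩, ⟨⟨a', b⟩, hb, rfl⟩⟩
  simpa using mul_mem (mk_one_mem_of_mem hcop ha) (one_mk_mem_of_mem hcop hb)

lemma exists_prod_le_prod_of_coprime (hcop : (Nat.card G).Coprime (Nat.card G'))
    {K H : Subgroup (G × G')} (h : K ≤ H) :
    ∃ (A A' : Subgroup G) (B B' : Subgroup G'),
      K = A.prod B ∧ H = A'.prod B' ∧ A ≤ A' ∧ B ≤ B' := by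
  obtain ⟨A, B, rfl⟩ := exists_eq_prod_of_coprime hcop K
  obtain ⟨A', B', rfl⟩ := exists_eq_prod_of_coprime hcop H
  exact ⟨A, A', B, B', rfl, rfl, prod_le_prod_iff.mp h⟩

end Subgroup

namespace IsSubInductor

variable {M : Type*} [CommGroup M]
  {J : ∀ K H : Subgroup M, K ≤ H → Set (CharGp K) → Set (CharGp H)} {K L H : Subgroup M}

lemma eq_biUnion_singleton (hJ : IsSubInductor J) (h : K ≤ H) (U : Set (CharGp K)) :
    J K H h U = ⋃ τ ∈ U, J K H h {τ} := by
  conv_lhs => rw [← Set.biUnion_of_singleton U, ← Set.sUnion_image]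
  rw [hJ.union_comm, Set.biUnion_image]

lemma apply_refl (hJ : IsSubInductor J) (h : H ≤ H) (U : Set (CharGp H)) : J H H h U = U := by
  simpa using hJ.res_cover h U

lemma resChar_of_mem_singleton (hJ : IsSubInductor J) (h : K ≤ H) {τ : CharGp K}
    {σ : CharGp H} (hσ : σ ∈ J K H h {τ}) : resChar h σ = τ := by
  simpa [hJ.res_cover] using Set.mem_image_of_mem (resChar h) hσ

lemma nonempty_singleton (hJ : IsSubInductor J) (h : K ≤ H) (τ : CharGp K) :
    (J K H h {τ}).Nonempty :=
  Set.image_nonempty.mp ((hJ.res_cover h {τ}).symm ▸ Set.singleton_nonempty τ)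

lemma charConj_mem_singleton (hJ : IsSubInductor J) (h : K ≤ H) {τ : CharGp K}
    {σ : CharGp H} (hσ : σ ∈ J K H h {τ}) : charConj σ ∈ J K H h {charConj τ} := by
  rw [← Set.image_singleton, hJ.conj_comm]
  exact Set.mem_image_of_mem _ hσ

lemma resChar_mem_singleton_inf (hJ : IsSubInductor J) (hK : K ≤ H) (hL : L ≤ H)
    {τ : CharGp L} {σ : CharGp H} (hσ : σ ∈ J L H hL {τ}) :
    resChar hK σ ∈ J (K ⊓ L) K inf_le_left {resChar inf_le_right τ} := by
  simpa using hJ.res_le hK hL {τ} (Set.mem_image_of_mem _ hσ)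

lemma mem_singleton_trans_iff (hJ : IsSubInductor J) (hKL : K ≤ L) (hLH : L ≤ H)
    {τ : CharGp K} {σ : CharGp H} :
    σ ∈ J K H (hKL.trans hLH) {τ} ↔ ∃ ρ ∈ J K L hKL {τ}, σ ∈ J L H hLH {ρ} := by
  rw [← hJ.comp hKL hLH, hJ.eq_biUnion_singleton hLH, Set.mem_iUnion₂]
  simp only [exists_prop]

lemma mem_resJ_iff (hJ : IsSubInductor J) {χ : CharGp H} :
    χ ∈ resJ J H ↔
      ∃ (K : Subgroup M) (hK : K < H) (τ : CharGp K), χ ∈ J K H hK.le {τ} := by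
  simp [resJ, hJ.eq_biUnion_singleton _ Set.univ]

end IsSubInductor

section TensorConstructions

variable {G G' : Type*} [CommGroup G] [CommGroup G']
  {D : ∀ H : Subgroup G, Set (CharGp H)} {D' : ∀ H : Subgroup G', Set (CharGp H)}
  {J : ∀ K H : Subgroup G, K ≤ H → Set (CharGp K) → Set (CharGp H)}
  {J' : ∀ K H : Subgroup G', K ≤ H → Set (CharGp K) → Set (CharGp H)}

/- Both constructions are defined on every subgroup of `G × G'` through its decompositions as a
product; under coprimality each subgroup has exactly one. -/

variable (D D') in
def tensorDiagram : ∀ W : Subgroup (G × G'), Set (CharGp W) := fun W =>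
  {ξ | ∃ (H : Subgroup G) (H' : Subgroup G') (hW : W = H.prod H') (χ : CharGp H)
    (χ' : CharGp H'), χ ∈ D H ∧ χ' ∈ D' H' ∧ ξ = resChar hW.le (charTensor χ χ')}

variable (J J') in
def tensorInd : ∀ K H : Subgroup (G × G'), K ≤ H → Set (CharGp K) → Set (CharGp H) :=
  fun K H _ U =>
    {ξ | ∃ (A A' : Subgroup G) (B B' : Subgroup G') (hK : K = A.prod B) (hH : H = A'.prod B')
      (hA : A ≤ A') (hB : B ≤ B') (τ : CharGp A) (τ' : CharGp B) (σ : CharGp A')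
      (σ' : CharGp B'), resChar hK.le (charTensor τ τ') ∈ U ∧ σ ∈ J A A' hA {τ} ∧
        σ' ∈ J' B B' hB {τ'} ∧ ξ = resChar hH.le (charTensor σ σ')}

lemma mem_tensorDiagram_prod {H : Subgroup G} {H' : Subgroup G'} {ξ : CharGp (H.prod H')} :
    ξ ∈ tensorDiagram D D' (H.prod H') ↔
      ∃ (χ : CharGp H) (χ' : CharGp H'),
        χ ∈ D H ∧ χ' ∈ D' H' ∧ ξ = charTensor χ χ' := by
  constructor
  · rintro ⟨A, B, hW, χ, χ', hχ, hχ', rfl⟩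
    obtain ⟨rfl, rfl⟩ := Subgroup.prod_inj.mp hW
    exact ⟨χ, χ', hχ, hχ', rfl⟩
  · rintro ⟨χ, χ', hχ, hχ', rfl⟩
    exact ⟨H, H', rfl, χ, χ', hχ, hχ', rfl⟩

lemma mem_tensorInd_prod {A A' : Subgroup G} {B B' : Subgroup G'} (hA : A ≤ A') (hB : B ≤ B')
    {h : A.prod B ≤ A'.prod B'} {U : Set (CharGp (A.prod B))} {ξ : CharGp (A'.prod B')} :
    ξ ∈ tensorInd J J' (A.prod B) (A'.prod B') h U ↔
      ∃ (τ : CharGp A) (τ' : CharGp B) (σ : CharGp A') (σ' : CharGp B'),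
        charTensor τ τ' ∈ U ∧ σ ∈ J A A' hA {τ} ∧ σ' ∈ J' B B' hB {τ'} ∧
        ξ = charTensor σ σ' := by
  constructor
  · rintro ⟨A, A', B, B', hK, hH, hA, hB, τ, τ', σ, σ', hU, hσ, hσ', rfl⟩
    obtain ⟨rfl, rfl⟩ := Subgroup.prod_inj.mp hK
    obtain ⟨rfl, rfl⟩ := Subgroup.prod_inj.mp hH
    exact ⟨τ, τ', σ, σ', hU, hσ, hσ', rfl⟩
  · rintro ⟨τ, τ', σ, σ', hU, hσ, hσ', rfl⟩
    exact ⟨A, A', B, B', rfl, rfl, hA, hB, τ, τ', σ, σ', hU, hσ, hσ', rfl⟩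

end TensorConstructions

section TensorInd

variable {G G' : Type*} [CommGroup G] [CommGroup G']
  {J : ∀ K H : Subgroup G, K ≤ H → Set (CharGp K) → Set (CharGp H)}
  {J' : ∀ K H : Subgroup G', K ≤ H → Set (CharGp K) → Set (CharGp H)}

lemma tensorInd_charConj_image (hcop : (Nat.card G).Coprime (Nat.card G'))
    (hJ : IsSubInductor J) (hJ' : IsSubInductor J') {K H : Subgroup (G × G')} (h : K ≤ H)
    (U : Set (CharGp K)) :
    tensorInd J J' K H h (charConj '' U) = charConj '' tensorInd J J' K H h U := by
  obtain ⟨A, A', B, B', rfl, rfl, hA, hB⟩ := Subgroup.exists_prod_le_prod_of_coprime hcop h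
  ext ξ
  rw [mem_charConj_image, mem_tensorInd_prod hA hB, mem_tensorInd_prod hA hB]
  constructor
  · rintro ⟨τ, τ', σ, σ', hU, hσ, hσ', rfl⟩
    rw [mem_charConj_image, charConj_charTensor] at hU
    exact ⟨charConj τ, charConj τ', charConj σ, charConj σ', hU,
      hJ.charConj_mem_singleton hA hσ, hJ'.charConj_mem_singleton hB hσ',
      charConj_charTensor σ σ'⟩
  · rintro ⟨τ, τ', σ, σ', hU, hσ, hσ', hξ⟩
    refine ⟨charConj τ, charConj τ', charConj σ, charConj σ', ?_,
      hJ.charConj_mem_singleton hA hσ, hJ'.charConj_mem_singleton hB hσ', ?_⟩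
    · rwa [mem_charConj_image, charConj_charTensor, charConj_charConj, charConj_charConj]
    · rw [← charConj_charTensor, ← hξ, charConj_charConj]

lemma tensorInd_sUnion (hcop : (Nat.card G).Coprime (Nat.card G'))
    {K H : Subgroup (G × G')} (h : K ≤ H) (s : Set (Set (CharGp K))) :
    tensorInd J J' K H h (⋃₀ s) = ⋃ U ∈ s, tensorInd J J' K H h U := by
  obtain ⟨A, A', B, B', rfl, rfl, hA, hB⟩ := Subgroup.exists_prod_le_prod_of_coprime hcop h
  ext ξ
  simp only [Set.mem_iUnion, mem_tensorInd_prod hA hB, Set.mem_sUnion]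
  constructor
  · rintro ⟨τ, τ', σ, σ', ⟨U, hU, hτ⟩, hσ, hσ', rfl⟩
    exact ⟨U, hU, τ, τ', σ, σ', hτ, hσ, hσ', rfl⟩
  · rintro ⟨U, hU, τ, τ', σ, σ', hτ, hσ, hσ', rfl⟩
    exact ⟨τ, τ', σ, σ', ⟨U, hU, hτ⟩, hσ, hσ', rfl⟩

lemma tensorInd_tensorInd (hcop : (Nat.card G).Coprime (Nat.card G'))
    (hJ : IsSubInductor J) (hJ' : IsSubInductor J') {K L H : Subgroup (G × G')}
    (hKL : K ≤ L) (hLH : L ≤ H) (U : Set (CharGp K)) :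
    tensorInd J J' L H hLH (tensorInd J J' K L hKL U) = tensorInd J J' K H (hKL.trans hLH) U := by
  obtain ⟨A, C, B, E, rfl, rfl, hAC, hBE⟩ := Subgroup.exists_prod_le_prod_of_coprime hcop hKL
  obtain ⟨A', B', rfl⟩ := Subgroup.exists_eq_prod_of_coprime hcop H
  obtain ⟨hCA', hEB'⟩ := Subgroup.prod_le_prod_iff.mp hLH
  ext ξ
  simp only [mem_tensorInd_prod hCA' hEB', mem_tensorInd_prod hAC hBE,
    mem_tensorInd_prod (hAC.trans hCA') (hBE.trans hEB'), charTensor_inj]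
  constructor
  · rintro ⟨ρ, ρ', σ, σ', ⟨τ, τ', _, _, hU, hρ, hρ', rfl, rfl⟩, hσ, hσ', rfl⟩
    exact ⟨τ, τ', σ, σ', hU, (hJ.mem_singleton_trans_iff hAC hCA').2 ⟨ρ, hρ, hσ⟩,
      (hJ'.mem_singleton_trans_iff hBE hEB').2 ⟨ρ', hρ', hσ'⟩, rfl⟩
  · rintro ⟨τ, τ', σ, σ', hU, hσ, hσ', rfl⟩
    obtain ⟨ρ, hρ, hσ⟩ := (hJ.mem_singleton_trans_iff hAC hCA').1 hσ
    obtain ⟨ρ', hρ', hσ'⟩ := (hJ'.mem_singleton_trans_iff hBE hEB').1 hσ'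
    exact ⟨ρ, ρ', σ, σ', ⟨τ, τ', ρ, ρ', hU, hρ, hρ', rfl, rfl⟩, hσ, hσ', rfl⟩

lemma resChar_image_tensorInd (hcop : (Nat.card G).Coprime (Nat.card G'))
    (hJ : IsSubInductor J) (hJ' : IsSubInductor J') {K H : Subgroup (G × G')} (h : K ≤ H)
    (U : Set (CharGp K)) : resChar h '' tensorInd J J' K H h U = U := by
  obtain ⟨A, A', B, B', rfl, rfl, hA, hB⟩ := Subgroup.exists_prod_le_prod_of_coprime hcop h
  ext ξ
  constructor
  · rintro ⟨_, hmem, rfl⟩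
    obtain ⟨τ, τ', σ, σ', hU, hσ, hσ', rfl⟩ := (mem_tensorInd_prod hA hB).mp hmem
    rwa [resChar_charTensor hA hB, hJ.resChar_of_mem_singleton hA hσ,
      hJ'.resChar_of_mem_singleton hB hσ']
  · intro hU
    obtain ⟨τ, τ', rfl⟩ := exists_charTensor_eq ξ
    obtain ⟨σ, hσ⟩ := hJ.nonempty_singleton hA τ
    obtain ⟨σ', hσ'⟩ := hJ'.nonempty_singleton hB τ'
    refine ⟨charTensor σ σ',
      (mem_tensorInd_prod hA hB).mpr ⟨τ, τ', σ, σ', hU, hσ, hσ', rfl⟩, ?_⟩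
    rw [resChar_charTensor hA hB, hJ.resChar_of_mem_singleton hA hσ,
      hJ'.resChar_of_mem_singleton hB hσ']

lemma resChar_image_tensorInd_subset (hcop : (Nat.card G).Coprime (Nat.card G'))
    (hJ : IsSubInductor J) (hJ' : IsSubInductor J') {K L H : Subgroup (G × G')} (hK : K ≤ H)
    (hL : L ≤ H) (U : Set (CharGp L)) :
    resChar hK '' tensorInd J J' L H hL U ⊆
      tensorInd J J' (K ⊓ L) K inf_le_left (resChar inf_le_right '' U) := by
  obtain ⟨A, A', B, B', rfl, rfl, hAA', hBB'⟩ := Subgroup.exists_prod_le_prod_of_coprime hcop hK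
  obtain ⟨C, E, rfl⟩ := Subgroup.exists_eq_prod_of_coprime hcop L
  obtain ⟨hCA', hEB'⟩ := Subgroup.prod_le_prod_iff.mp hL
  rintro - ⟨_, hmem, rfl⟩
  obtain ⟨τ, τ', σ, σ', hU, hσ, hσ', rfl⟩ := (mem_tensorInd_prod hCA' hEB').mp hmem
  exact ⟨A ⊓ C, A, B ⊓ E, B, Subgroup.prod_inf_prod, rfl, inf_le_left, inf_le_left,
    resChar inf_le_right τ, resChar inf_le_right τ', resChar hAA' σ, resChar hBB' σ',
    ⟨_, hU, rfl⟩, hJ.resChar_mem_singleton_inf hAA' hCA' hσ,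
    hJ'.resChar_mem_singleton_inf hBB' hEB' hσ', rfl⟩

lemma one_mem_tensorInd (hcop : (Nat.card G).Coprime (Nat.card G'))
    (hJ : IsSubInductor J) (hJ' : IsSubInductor J') {K H : Subgroup (G × G')} (h : K ≤ H) :
    (1 : CharGp H) ∈ tensorInd J J' K H h {1} := by
  obtain ⟨A, A', B, B', rfl, rfl, hA, hB⟩ := Subgroup.exists_prod_le_prod_of_coprime hcop h
  exact (mem_tensorInd_prod hA hB).mpr
    ⟨1, 1, 1, 1, charTensor_one, hJ.one_mem hA, hJ'.one_mem hB, charTensor_one.symm⟩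

lemma IsSubInductor.tensor (hcop : (Nat.card G).Coprime (Nat.card G'))
    (hJ : IsSubInductor J) (hJ' : IsSubInductor J') : IsSubInductor (tensorInd J J') where
  conj_comm := tensorInd_charConj_image hcop hJ hJ'
  union_comm := tensorInd_sUnion hcop
  comp := tensorInd_tensorInd hcop hJ hJ'
  res_cover := resChar_image_tensorInd hcop hJ hJ'
  res_le := resChar_image_tensorInd_subset hcop hJ hJ'
  one_mem := one_mem_tensorInd hcop hJ hJ'

end TensorInd

section TightWitness

variable {M : Type*} [CommGroup M] {D : ∀ H : Subgroup M, Set (CharGp H)}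
  {J : ∀ K H : Subgroup M, K ≤ H → Set (CharGp K) → Set (CharGp H)}

/- Conditions (2) and (3) of a tight pair, for `K < H` and `K = H` respectively, say that
every `K ≤ H` admits such a witness. -/
def IsTightWitness (D : ∀ H : Subgroup M, Set (CharGp H))
    (J : ∀ K H : Subgroup M, K ≤ H → Set (CharGp K) → Set (CharGp H)) {K H : Subgroup M}
    (h : K ≤ H) (χ : CharGp H) : Prop :=
  resChar h χ ∈ D K ∧ χ ∉ resJ J H ∧ (K ≠ H → χ ∉ D H)

lemma IsTightPair.exists_isTightWitness (hDJ : IsTightPair D J) {K H : Subgroup M}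
    (h : K ≤ H) : ∃ χ, IsTightWitness D J h χ := by
  rcases h.eq_or_lt with rfl | hlt
  · obtain ⟨χ, hχ, hnres⟩ := Set.not_subset.mp (hDJ.not_res K)
    exact ⟨χ, hχ, hnres, fun hne => (hne rfl).elim⟩
  · obtain ⟨χ, hχ, hnot⟩ := Set.not_subset.mp (hDJ.ind_not_le hlt)
    rw [Set.mem_union, not_or] at hnot
    exact ⟨χ, hχ, hnot.2, fun _ => hnot.1⟩

lemma IsTightPair.of_exists_isTightWitness (hD : RStable D) (hJ : IsSubInductor J)
    (hconj : ∀ H : Subgroup M, ∀ χ ∈ D H, charConj χ ∈ D H)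
    (hwit : ∀ {K H : Subgroup M} (h : K ≤ H), ∃ χ, IsTightWitness D J h χ) :
    IsTightPair D J where
  rstable := hD
  subind := hJ
  conj_inv := hconj
  ind_not_le hlt := by
    obtain ⟨χ, hres, hnres, hnD⟩ := hwit hlt.le
    exact Set.not_subset.mpr ⟨χ, hres, by rintro (hD | hR); exacts [hnD hlt.ne hD, hnres hR]⟩
  not_res H := by
    obtain ⟨χ, hres, hnres, -⟩ := hwit (le_refl H)
    exact Set.not_subset.mpr ⟨χ, hres, hnres⟩

end TightWitness

section TightPair

variable {G G' : Type*} [CommGroup G] [CommGroup G']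
  {D : ∀ H : Subgroup G, Set (CharGp H)} {D' : ∀ H : Subgroup G', Set (CharGp H)}
  {J : ∀ K H : Subgroup G, K ≤ H → Set (CharGp K) → Set (CharGp H)}
  {J' : ∀ K H : Subgroup G', K ≤ H → Set (CharGp K) → Set (CharGp H)}

lemma charTensor_mem_resJ_tensorInd_iff (hcop : (Nat.card G).Coprime (Nat.card G'))
    (hJ : IsSubInductor J) (hJ' : IsSubInductor J') {H : Subgroup G} {H' : Subgroup G'}
    {χ : CharGp H} {χ' : CharGp H'} :
    charTensor χ χ' ∈ resJ (tensorInd J J') (H.prod H') ↔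
      χ ∈ resJ J H ∨ χ' ∈ resJ J' H' := by
  rw [hJ.mem_resJ_iff, hJ'.mem_resJ_iff]
  simp only [resJ, Set.mem_iUnion]
  constructor
  · rintro ⟨W, hW, hmem⟩
    obtain ⟨A, B, rfl⟩ := Subgroup.exists_eq_prod_of_coprime hcop W
    obtain ⟨hA, hB, hne⟩ := Subgroup.prod_lt_prod_iff.mp hW
    obtain ⟨τ, τ', σ, σ', -, hσ, hσ', heq⟩ := (mem_tensorInd_prod hA hB).mp hmem
    obtain ⟨rfl, rfl⟩ := charTensor_inj.mp heq
    by_cases hAH : A = H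
    · subst hAH
      exact .inr ⟨B, lt_of_le_of_ne hB (hne.resolve_left (not_not.mpr rfl)), τ', hσ'⟩
    · exact .inl ⟨A, lt_of_le_of_ne hA hAH, τ, hσ⟩
  · rintro (⟨A, hA, τ, hσ⟩ | ⟨B, hB, τ', hσ'⟩)
    · refine ⟨A.prod H', Subgroup.prod_lt_prod_iff.mpr ⟨hA.le, le_rfl, .inl hA.ne⟩,
        (mem_tensorInd_prod hA.le le_rfl).mpr ⟨τ, χ', χ, χ', trivial, hσ, ?_, rfl⟩⟩
      rw [hJ'.apply_refl]
      rfl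
    · refine ⟨H.prod B, Subgroup.prod_lt_prod_iff.mpr ⟨le_rfl, hB.le, .inr hB.ne⟩,
        (mem_tensorInd_prod le_rfl hB.le).mpr ⟨χ, τ', χ, χ', trivial, ?_, hσ', rfl⟩⟩
      rw [hJ.apply_refl]
      rfl

lemma RStable.tensorDiagram (hcop : (Nat.card G).Coprime (Nat.card G')) (hD : RStable D)
    (hD' : RStable D') : RStable (tensorDiagram D D') := by
  intro K H h
  obtain ⟨A, A', B, B', rfl, rfl, hA, hB⟩ := Subgroup.exists_prod_le_prod_of_coprime hcop h
  rintro _ ⟨_, hmem, rfl⟩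
  obtain ⟨χ, χ', hχ, hχ', rfl⟩ := mem_tensorDiagram_prod.mp hmem
  exact mem_tensorDiagram_prod.mpr ⟨resChar hA χ, resChar hB χ',
    hD hA (Set.mem_image_of_mem _ hχ), hD' hB (Set.mem_image_of_mem _ hχ'), rfl⟩

lemma charConj_mem_tensorDiagram (hcop : (Nat.card G).Coprime (Nat.card G'))
    (hD : ∀ H : Subgroup G, ∀ χ ∈ D H, charConj χ ∈ D H)
    (hD' : ∀ H : Subgroup G', ∀ χ ∈ D' H, charConj χ ∈ D' H)
    (W : Subgroup (G × G')) (ξ : CharGp W) (hξ : ξ ∈ tensorDiagram D D' W) :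
    charConj ξ ∈ tensorDiagram D D' W := by
  obtain ⟨A, B, rfl⟩ := Subgroup.exists_eq_prod_of_coprime hcop W
  obtain ⟨χ, χ', hχ, hχ', rfl⟩ := mem_tensorDiagram_prod.mp hξ
  exact mem_tensorDiagram_prod.mpr
    ⟨charConj χ, charConj χ', hD A χ hχ, hD' B χ' hχ', charConj_charTensor χ χ'⟩

lemma IsTightWitness.tensor (hcop : (Nat.card G).Coprime (Nat.card G'))
    (hJ : IsSubInductor J) (hJ' : IsSubInductor J') {A A' : Subgroup G} {B B' : Subgroup G'}
    {hA : A ≤ A'} {hB : B ≤ B'} {χ : CharGp A'} {χ' : CharGp B'}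
    (hχ : IsTightWitness D J hA χ) (hχ' : IsTightWitness D' J' hB χ')
    (h : A.prod B ≤ A'.prod B') :
    IsTightWitness (tensorDiagram D D') (tensorInd J J') h (charTensor χ χ') := by
  obtain ⟨hres, hnres, hnD⟩ := hχ
  obtain ⟨hres', hnres', hnD'⟩ := hχ'
  refine ⟨mem_tensorDiagram_prod.mpr ⟨_, _, hres, hres', rfl⟩, ?_, fun hne hmem => ?_⟩
  · rw [charTensor_mem_resJ_tensorInd_iff hcop hJ hJ']
    tauto
  · obtain ⟨ψ, ψ', hψ, hψ', heq⟩ := mem_tensorDiagram_prod.mp hmem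
    obtain ⟨rfl, rfl⟩ := charTensor_inj.mp heq
    rw [Ne, Subgroup.prod_inj, not_and_or] at hne
    exact hne.elim (fun hA => hnD hA hψ) (fun hB => hnD' hB hψ')

lemma IsTightPair.tensor (hcop : (Nat.card G).Coprime (Nat.card G'))
    (hDJ : IsTightPair D J) (hDJ' : IsTightPair D' J') :
    IsTightPair (tensorDiagram D D') (tensorInd J J') := by
  refine .of_exists_isTightWitness (RStable.tensorDiagram hcop hDJ.rstable hDJ'.rstable)
    (hDJ.subind.tensor hcop hDJ'.subind)
    (charConj_mem_tensorDiagram hcop hDJ.conj_inv hDJ'.conj_inv) fun h => ?_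
  obtain ⟨A, A', B, B', rfl, rfl, hA, hB⟩ := Subgroup.exists_prod_le_prod_of_coprime hcop h
  obtain ⟨χ, hχ⟩ := hDJ.exists_isTightWitness hA
  obtain ⟨χ', hχ'⟩ := hDJ'.exists_isTightWitness hB
  exact ⟨_, hχ.tensor hcop hDJ.subind hDJ'.subind hχ' h⟩

end TightPair

theorem tensor_tight_pair_general (G G' : Type*) [CommGroup G]
    [CommGroup G']
    (hcop : Nat.Coprime (Nat.card G) (Nat.card G'))
    (D : ∀ H : Subgroup G, Set (CharGp H))
    (J : ∀ K H : Subgroup G, K ≤ H → Set (CharGp K) → Set (CharGp H))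
    (hDJ : IsTightPair D J)
    (D' : ∀ H : Subgroup G', Set (CharGp H))
    (J' : ∀ K H : Subgroup G', K ≤ H → Set (CharGp K) → Set (CharGp H))
    (hDJ' : IsTightPair D' J') :
    ∃ (DD : ∀ W : Subgroup (G × G'), Set (CharGp W))
      (T : ∀ K H : Subgroup (G × G'), K ≤ H → Set (CharGp K) → Set (CharGp H)),
      (∀ (H : Subgroup G) (H' : Subgroup G'),
        DD (H.prod H') =
          {ξ | ∃ (χ : CharGp H) (χ' : CharGp H'), χ ∈ D H ∧ χ' ∈ D' H' ∧
            ξ = charTensor χ χ'}) ∧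
      (∀ (K H : Subgroup G) (K' H' : Subgroup G') (hK : K ≤ H) (hK' : K' ≤ H')
        (hP : K.prod K' ≤ H.prod H') (U : Set (CharGp (K.prod K'))),
        T (K.prod K') (H.prod H') hP U =
          {ξ | ∃ (τ : CharGp K) (τ' : CharGp K') (σ : CharGp H) (σ' : CharGp H'),
            charTensor τ τ' ∈ U ∧ σ ∈ J K H hK {τ} ∧ σ' ∈ J' K' H' hK' {τ'} ∧
            ξ = charTensor σ σ'}) ∧
      IsTightPair DD T :=
  ⟨tensorDiagram D D', tensorInd J J', fun _ _ => Set.ext fun _ => mem_tensorDiagram_prod,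
    fun _ _ _ _ hK hK' _ _ => Set.ext fun _ => mem_tensorInd_prod hK hK', hDJ.tensor hcop hDJ'⟩

/-- **Lemma (localization of tight pairs).** If `G`, `G'` are finite abelian groups
of coprime orders equipped with tight pairs `(D,J)` and `(D',J')`, then
`(D ⊗ D', J ⊗ J')` is a tight pair on `G × G'`, where
`(D ⊗ D')(H×H') = {χ ⊗ χ' : χ ∈ D(H), χ' ∈ D'(H')}` and `J ⊗ J'` is determined on
subgroups `K×K' ≤ H×H'` by `(J⊗J')({τ⊗τ'}) = J({τ}) ⊗ J'({τ'})` on singletons,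
extended by unions. -/
theorem tensor_tight_pair (G G' : Type*) [CommGroup G] [Fintype G]
    [CommGroup G'] [Fintype G']
    (hcop : Nat.Coprime (Nat.card G) (Nat.card G'))
    (D : ∀ H : Subgroup G, Set (CharGp H))
    (J : ∀ K H : Subgroup G, K ≤ H → Set (CharGp K) → Set (CharGp H))
    (hDJ : IsTightPair D J)
    (D' : ∀ H : Subgroup G', Set (CharGp H))
    (J' : ∀ K H : Subgroup G', K ≤ H → Set (CharGp K) → Set (CharGp H))
    (hDJ' : IsTightPair D' J') :
    ∃ (DD : ∀ W : Subgroup (G × G'), Set (CharGp W))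
      (T : ∀ K H : Subgroup (G × G'), K ≤ H → Set (CharGp K) → Set (CharGp H)),
      (∀ (H : Subgroup G) (H' : Subgroup G'),
        DD (H.prod H') =
          {ξ | ∃ (χ : CharGp H) (χ' : CharGp H'), χ ∈ D H ∧ χ' ∈ D' H' ∧
            ξ = charTensor χ χ'}) ∧
      (∀ (K H : Subgroup G) (K' H' : Subgroup G') (hK : K ≤ H) (hK' : K' ≤ H')
        (hP : K.prod K' ≤ H.prod H') (U : Set (CharGp (K.prod K'))),
        T (K.prod K') (H.prod H') hP U =
          {ξ | ∃ (τ : CharGp K) (τ' : CharGp K') (σ : CharGp H) (σ' : CharGp H'),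
            charTensor τ τ' ∈ U ∧ σ ∈ J K H hK {τ} ∧ σ' ∈ J' K' H' hK' {τ'} ∧
            ξ = charTensor σ σ'}) ∧
      IsTightPair DD T :=
  tensor_tight_pair_general G G' hcop D J hDJ D' J' hDJ'
end

section
/- Let G be a finite abelian p-group and D a diagram on G, and set C₁ = min{ |J[D]_K^H({χ})| : K < H ≤ G with [H:K] = p and χ ∈ K̂ }. Then for every pair of subgroups K < H ≤ G and every χ ∈ K̂, |J[D]_K^H({χ})| ≥ C₁^{rk(K,H)}, where rk(K,H) = log_p [H:K]. -/
open scoped Classical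

/-- The family `J[D]` associated to a diagram `D`:
`J[D]_K^H(U) = I_K^H(U) \ ⋃_{L ∈ (K,H]} I_L^H(D(L))`. -/
def JD {G : Type*} [CommGroup G] (D : ∀ H : Subgroup G, Set (CharGp H))
    (K H : Subgroup G) (h : K ≤ H) (U : Set (CharGp K)) : Set (CharGp H) :=
  (resChar h ⁻¹' U) \
    ⋃ (L : Subgroup G) (hL : L ≤ H) (_ : ¬ L ≤ K), resChar hL ⁻¹' D L

/-!
Choose `K ≤ M ≤ H` with `[M : K] = p`. Restriction to `M` maps `J[D]_K^H({χ})` into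
`J[D]_K^M({χ})`, and its fibre over `χ'` is exactly `J[D]_M^H({χ'})`: a subgroup `L ≤ H` with
`L ≰ K` either lies in `M`, where `χ'` already avoids `D(L)`, or satisfies `L ≰ M`. Counting
fibres gives `|J[D]_K^H({χ})| ≥ C₁ · C₁^{r-1}` by induction on `r`, which can start at `r = 0`
because `J[D]_K^K({χ}) = {χ}`.
-/

theorem Set.ncard_mul_le_ncard_of_le_ncard_fiber {α β : Type*} [Finite α] [Finite β]
    (f : α → β) {S : Set α} {T : Set β} {c : ℕ}
    (hfib : ∀ b ∈ T, c ≤ (S ∩ f ⁻¹' {b}).ncard) : T.ncard * c ≤ S.ncard := by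
  have := Fintype.ofFinite α
  have := Fintype.ofFinite β
  by_contra! hlt
  rw [Set.ncard_eq_toFinset_card' S, Set.ncard_eq_toFinset_card' T] at hlt
  obtain ⟨b, hb, hfew⟩ := Finset.exists_card_fiber_lt_of_card_lt_mul (f := f) hlt
  refine (hfib b (Set.mem_toFinset.mp hb)).not_gt (lt_of_eq_of_lt ?_ hfew)
  rw [Set.ncard_eq_toFinset_card']
  congr 1
  ext a
  simp

theorem Subgroup.exists_relIndex_eq_prime_of_relIndex_eq_pow_succ {G : Type*} [CommGroup G]
    {p s : ℕ} [Fact p.Prime] {K H : Subgroup G} (hKH : K ≤ H)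
    (hrel : K.relIndex H = p ^ (s + 1)) :
    ∃ M : Subgroup G, K ≤ M ∧ M ≤ H ∧ K.relIndex M = p ∧ M.relIndex H = p ^ s := by
  set N := K.subgroupOf H
  have hcard : Nat.card (H ⧸ N) = p ^ (s + 1) := hrel
  have : Finite (H ⧸ N) :=
    Nat.finite_of_card_ne_zero (by simp [hcard, (Fact.out : p.Prime).ne_zero])
  obtain ⟨Z, hZ⟩ := Sylow.exists_subgroup_card_pow_prime (G := H ⧸ N) p (n := 1)
    (by rw [hcard]; exact pow_dvd_pow p (Nat.le_add_left 1 s))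
  set M' := Z.comap (QuotientGroup.mk' N)
  set M := M'.map H.subtype
  have hNM' : N ≤ M' := by
    rw [← QuotientGroup.ker_mk' N]
    exact MonoidHom.ker_le_comap _ _
  have hKM : K ≤ M := by
    have : K ⊓ H ≤ M := Subgroup.subgroupOf_map_subtype K H ▸ Subgroup.map_mono hNM'
    simpa [hKH] using this
  have hMH_rel : M.relIndex H = p ^ s := by
    have hZ_index : Z.index = p ^ s := by
      have := Z.card_mul_index
      rw [hZ, hcard, pow_one, pow_succ'] at this
      exact Nat.eq_of_mul_eq_mul_left (Fact.out : p.Prime).pos this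
    show (M.subgroupOf H).index = p ^ s
    rw [show M.subgroupOf H = M' from
        Subgroup.comap_map_eq_self_of_injective H.subtype_injective M',
      Subgroup.index_comap_of_surjective _ (QuotientGroup.mk'_surjective N), hZ_index]
  refine ⟨M, hKM, Subgroup.map_subtype_le M', ?_, hMH_rel⟩
  have := Subgroup.relIndex_mul_relIndex K M H hKM (Subgroup.map_subtype_le M')
  rw [hMH_rel, hrel, pow_succ'] at this
  exact Nat.eq_of_mul_eq_mul_right (pow_pos (Fact.out : p.Prime).pos s) this

section JD

variable {G : Type*} [CommGroup G] (D : ∀ H : Subgroup G, Set (CharGp H))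

theorem JD_self {K : Subgroup G} (h : K ≤ K) (U : Set (CharGp K)) : JD D K K h U = U := by
  ext χ
  simp only [JD, Set.mem_sdiff, Set.mem_iUnion, exists_prop]
  exact ⟨fun hχ => hχ.1, fun hχ => ⟨hχ, fun ⟨_, hL, hLK, _⟩ => hLK hL⟩⟩

theorem JD_inter_preimage_resChar {K M H : Subgroup G} (hKM : K ≤ M) (hMH : M ≤ H)
    {χ : CharGp K} {χ' : CharGp M} (hχ' : χ' ∈ JD D K M hKM {χ}) :
    JD D K H (hKM.trans hMH) {χ} ∩ resChar hMH ⁻¹' {χ'} = JD D M H hMH {χ'} := by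
  obtain ⟨hχ'χ, hχ'D⟩ := hχ'
  ext ψ
  simp only [JD, Set.mem_inter_iff, Set.mem_sdiff, Set.mem_preimage, Set.mem_singleton_iff,
    Set.mem_iUnion, exists_prop, not_exists, not_and] at hχ'χ hχ'D ⊢
  constructor
  · rintro ⟨⟨-, hψD⟩, hψχ'⟩
    exact ⟨hψχ', fun L hLH hLM => hψD L hLH fun hLK => hLM (hLK.trans hKM)⟩
  · rintro ⟨hψχ', hψD⟩
    refine ⟨⟨?_, fun L hLH hLK hL => ?_⟩, hψχ'⟩
    · rw [← hχ'χ, ← hψχ']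
      rfl
    · by_cases hLM : L ≤ M
      · exact hχ'D L hLM hLK (by rwa [← hψχ'])
      · exact hψD L hLH hLM hL

variable [Finite G]

theorem ncard_JD_mul_le_ncard_JD {K M H : Subgroup G} (hKM : K ≤ M) (hMH : M ≤ H)
    (χ : CharGp K) {c : ℕ} (hc : ∀ χ' ∈ JD D K M hKM {χ}, c ≤ (JD D M H hMH {χ'}).ncard) :
    (JD D K M hKM {χ}).ncard * c ≤ (JD D K H (hKM.trans hMH) {χ}).ncard :=
  Set.ncard_mul_le_ncard_of_le_ncard_fiber (resChar hMH) fun χ' hχ' =>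
    (JD_inter_preimage_resChar D hKM hMH hχ').symm ▸ hc χ' hχ'

theorem pow_le_ncard_JD_of_relIndex_eq_pow {p : ℕ} [Fact p.Prime] {C : ℕ}
    (hC : ∀ (K H : Subgroup G) (h : K ≤ H) (χ : CharGp K), K.relIndex H = p →
      C ≤ (JD D K H h {χ}).ncard) (r : ℕ) :
    ∀ (K H : Subgroup G) (h : K ≤ H) (χ : CharGp K), K.relIndex H = p ^ r →
      C ^ r ≤ (JD D K H h {χ}).ncard := by
  induction r with
  | zero =>
    intro K H h χ hrel
    obtain rfl : K = H := le_antisymm h (Subgroup.relIndex_eq_one.mp (by simpa using hrel))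
    simp [JD_self]
  | succ s ih =>
    intro K H h χ hrel
    obtain ⟨M, hKM, hMH, hKM_rel, hMH_rel⟩ :=
      Subgroup.exists_relIndex_eq_prime_of_relIndex_eq_pow_succ h hrel
    calc C ^ (s + 1) = C * C ^ s := pow_succ' C s
      _ ≤ (JD D K M hKM {χ}).ncard * C ^ s := Nat.mul_le_mul_right _ (hC K M hKM χ hKM_rel)
      _ ≤ (JD D K H h {χ}).ncard :=
        ncard_JD_mul_le_ncard_JD D hKM hMH χ fun χ' _ => ih M H hMH χ' hMH_rel

end JD

theorem clustered_from_index_p_general (p : ℕ) (hp : p.Prime)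
    (G : Type*) [CommGroup G] [Fintype G]
    (D : ∀ H : Subgroup G, Set (CharGp H)) :
    ∀ (K H : Subgroup G) (h : K < H) (χ : CharGp K) (r : ℕ),
      K.relIndex H = p ^ r →
      (sInf {n : ℕ | ∃ (K' H' : Subgroup G) (h' : K' < H') (χ' : CharGp K'),
          K'.relIndex H' = p ∧ n = (JD D K' H' h'.le {χ'}).ncard}) ^ r
        ≤ (JD D K H h.le {χ}).ncard := by
  have : Fact p.Prime := ⟨hp⟩
  intro K H h χ r hrel
  refine pow_le_ncard_JD_of_relIndex_eq_pow D (fun K' H' h' χ' hrel' => ?_) r K H h.le χ hrel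
  have hlt : K' < H' := h'.lt_of_not_ge fun hHK => hp.one_lt.ne' <| by
    rw [← hrel', Subgroup.relIndex_eq_one.mpr hHK]
  exact Nat.sInf_le ⟨K', H', hlt, χ', hrel', rfl⟩

/-- **Lemma (clusteredness from index-`p` steps).** Let `G` be a finite abelian
`p`-group, `D` a diagram on `G`, and `C₁` the minimum of `|J[D]_K^H({χ})|` over all
`K < H` of index `p` and `χ ∈ K̂`. Then for all `K < H` with `[H:K] = p^r` and all
`χ ∈ K̂`, `|J[D]_K^H({χ})| ≥ C₁ ^ r`. -/
theorem clustered_from_index_p (p : ℕ) (hp : p.Prime)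
    (G : Type*) [CommGroup G] [Fintype G] (hG : IsPGroup p G)
    (D : ∀ H : Subgroup G, Set (CharGp H)) :
    ∀ (K H : Subgroup G) (h : K < H) (χ : CharGp K) (r : ℕ),
      K.relIndex H = p ^ r →
      (sInf {n : ℕ | ∃ (K' H' : Subgroup G) (h' : K' < H') (χ' : CharGp K'),
          K'.relIndex H' = p ∧ n = (JD D K' H' h'.le {χ'}).ncard}) ^ r
        ≤ (JD D K H h.le {χ}).ncard :=
  clustered_from_index_p_general p hp G D
end

section
/- Let p be a prime and G a finite abelian p-group of rank two with |G| = pⁿ. Then: (i) for every i and every real number k, the sum over subgroups H ≤ G with |H| = pⁱ of |H|^{-k} is at most 2·p^{i(1-k)}; (ii) the sum over nontrivial subgroups H ≤ G of 1/|H| is at most 2n; (iii) if p ≥ 3 and k ≥ 2 is real, the sum over nontrivial subgroups H ≤ G of |H|^{-k} is at most 3·p^{1-k}. -/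
open scoped Classical

/-! Write `G = ⟨a, b⟩` and `A = ⟨a⟩`, so that `A` and `G ⧸ A` are cyclic. Subgroups `H` of order
`d` whose image in `G ⧸ A` has order `e` all have the same trace `K = H ⊓ A` and the same image
`⟨g₀⟩`, these being the unique subgroups of their orders in cyclic groups. Fixing one such `H₀` and
a lift `x₀ ∈ H₀` of `g₀`, every such `H` equals `K ⊔ ⟨x₀ z⟩` with `z` in
`Z = {z ∈ A | zᵉ ∈ K}`, and only the class of `z` modulo `K` matters; since `Z` is cyclic of
exponent dividing `e |K|`, there are at most `e` such `H`. Summing over `e ∣ d` bounds the number of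
subgroups of order `d` by `σ(d)`, and `σ(pⁱ) ≤ 2pⁱ`. Grouping subgroups by order then gives all
three sums, using `∑ᵢ₌₁ⁿ rⁱ ≤ 3r/2` for `r = p^{1-k} ≤ 1/3`. -/

theorem IsCyclic.card_le_of_forall_pow_eq_one {α : Type*} [Group α] [IsCyclic α] {d : ℕ}
    (hd : 0 < d) (h : ∀ x : α, x ^ d = 1) : Nat.card α ≤ d :=
  IsCyclic.exponent_eq_card (α := α) ▸
    Nat.le_of_dvd hd (Monoid.exponent_dvd_of_forall_pow_eq_one h)

namespace Subgroup

variable {G Q : Type*} [Group G] [Group Q]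

theorem pow_card_eq_one_of_mem {H : Subgroup G} {x : G} (hx : x ∈ H) : x ^ Nat.card H = 1 :=
  congrArg Subtype.val (pow_card_eq_one' (G := H) (x := ⟨x, hx⟩))

theorem card_inf_ker_mul_card_map (f : G →* Q) (H : Subgroup G) :
    Nat.card (H ⊓ f.ker : Subgroup G) * Nat.card (H.map f) = Nat.card H := by
  set ρ := f.comp H.subtype
  have hker : Nat.card ρ.ker = Nat.card (H ⊓ f.ker : Subgroup G) := by
    change Nat.card (f.ker.subgroupOf H) = _
    rw [← inf_subgroupOf_left]
    exact Nat.card_congr (subgroupOfEquivOfLe inf_le_left).toEquiv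
  have hrange : Nat.card ρ.range = Nat.card (H.map f) := by
    rw [MonoidHom.range_comp, range_subtype]
  rw [← hker, ← hrange, ← index_ker, card_mul_index]

theorem pow_card_map_mem_inf_ker (f : G →* Q) {H : Subgroup G} {x : G} (hx : x ∈ H) :
    x ^ Nat.card (H.map f) ∈ H ⊓ f.ker :=
  mem_inf.2 ⟨pow_mem hx _, by
    rw [MonoidHom.mem_ker, map_pow]; exact pow_card_eq_one_of_mem (mem_map_of_mem f hx)⟩

theorem eq_inf_ker_sup_zpowers (f : G →* Q) {H : Subgroup G} {x : G} (hx : x ∈ H)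
    (hmap : H.map f = zpowers (f x)) : H = (H ⊓ f.ker) ⊔ zpowers x := by
  refine le_antisymm (fun h hh => ?_) (sup_le inf_le_left (zpowers_le.2 hx))
  obtain ⟨t, ht⟩ : f h ∈ zpowers (f x) := hmap ▸ mem_map_of_mem f hh
  have hk : h * (x ^ t)⁻¹ ∈ H ⊓ f.ker :=
    mem_inf.2 ⟨mul_mem hh (inv_mem (zpow_mem hx t)), by simp [← ht]⟩
  simpa using mul_mem (mem_sup_left hk) (mem_sup_right (zpow_mem_zpowers x t))

theorem sup_zpowers_mul_of_mem {K : Subgroup G} {y k : G} (hk : k ∈ K) :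
    K ⊔ zpowers (y * k) = K ⊔ zpowers y := by
  have key : ∀ y k : G, k ∈ K → K ⊔ zpowers (y * k) ≤ K ⊔ zpowers y := fun y k hk =>
    sup_le le_sup_left (zpowers_le.2 (mul_mem (mem_sup_right (mem_zpowers y)) (mem_sup_left hk)))
  exact le_antisymm (key y k hk) (by simpa using key (y * k) k⁻¹ (inv_mem hk))

theorem ncard_range_sup_zpowers_mul_mul_card_le [Finite G] {K Z : Subgroup G} (hKZ : K ≤ Z)
    (x₀ : G) :
    (Set.range fun z : Z => K ⊔ zpowers (x₀ * z)).ncard * Nat.card K ≤ Nat.card Z := by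
  set K' := K.subgroupOf Z
  have hrange : (Set.range fun z : Z => K ⊔ zpowers (x₀ * z)) ⊆
      Set.range fun q : Z ⧸ K' => K ⊔ zpowers (x₀ * q.out) := by
    rintro _ ⟨z, rfl⟩
    obtain ⟨k, hk⟩ := QuotientGroup.mk_out_eq_mul K' z
    refine ⟨z, ?_⟩
    dsimp only
    rw [hk, coe_mul, ← mul_assoc, sup_zpowers_mul_of_mem (mem_subgroupOf.1 k.2)]
  calc _ ≤ Nat.card (Z ⧸ K') * Nat.card K := by
        gcongr
        exact (Set.ncard_le_ncard hrange).trans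
          ((Nat.card_coe_set_eq _).symm.trans_le (Finite.card_range_le _))
    _ = Nat.card Z := by
        rw [← Nat.card_congr (subgroupOfEquivOfLe hKZ).toEquiv,
          ← card_eq_card_quotient_mul_card_subgroup]

end Subgroup

namespace Subgroup

variable {G : Type*} [CommGroup G]

theorem isCyclic_quotient_zpowers_of_closure_pair_eq_top {a b : G}
    (hab : closure {a, b} = ⊤) : IsCyclic (G ⧸ zpowers a) := by
  set π := QuotientGroup.mk' (zpowers a)
  have hmap : (closure {a, b}).map π = zpowers (π b) := by
    have hπa : π a = 1 := (QuotientGroup.eq_one_iff a).2 (mem_zpowers a)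
    rw [MonoidHom.map_closure, Set.image_pair, hπa, closure_insert_one, ← zpowers_eq_closure]
  rw [hab, map_top_of_surjective π (QuotientGroup.mk'_surjective _)] at hmap
  exact isCyclic_iff_exists_zpowers_eq_top.2 ⟨π b, hmap.symm⟩

variable [Finite G] {A : Subgroup G}

theorem eq_of_card_eq_of_le_isCyclic [IsCyclic A] {H₁ H₂ : Subgroup G}
    (h₁ : H₁ ≤ A) (h₂ : H₂ ≤ A) (h : Nat.card H₁ = Nat.card H₂) : H₁ = H₂ := by
  suffices key : ∀ H ≤ A, H = A ⊓ (powMonoidHom (Nat.card H)).ker by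
    rw [key H₁ h₁, key H₂ h₂, h]
  intro H hH
  have : IsCyclic (A ⊓ (powMonoidHom (Nat.card H)).ker : Subgroup G) := isCyclic_of_le inf_le_left
  exact eq_of_le_of_card_ge (le_inf hH fun x hx => pow_card_eq_one_of_mem hx)
    (IsCyclic.card_le_of_forall_pow_eq_one Nat.card_pos fun x => Subtype.ext x.2.2)

theorem card_inf_comap_powMonoidHom_le [IsCyclic A] (K : Subgroup G) {e : ℕ} (he : 0 < e) :
    Nat.card (A ⊓ K.comap (powMonoidHom e) : Subgroup G) ≤ e * Nat.card K := by
  have : IsCyclic (A ⊓ K.comap (powMonoidHom e) : Subgroup G) := isCyclic_of_le inf_le_left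
  refine IsCyclic.card_le_of_forall_pow_eq_one (Nat.mul_pos he Nat.card_pos) fun z => ?_
  exact Subtype.ext (by simpa [pow_mul] using pow_card_eq_one_of_mem (H := K) z.2.2)

theorem inf_eq_and_map_eq_of_card_eq [IsCyclic A] [IsCyclic (G ⧸ A)] {H H' : Subgroup G}
    (hd : Nat.card H = Nat.card H')
    (he : Nat.card (H.map (QuotientGroup.mk' A)) = Nat.card (H'.map (QuotientGroup.mk' A))) :
    H ⊓ A = H' ⊓ A ∧ H.map (QuotientGroup.mk' A) = H'.map (QuotientGroup.mk' A) := by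
  have hcard := card_inf_ker_mul_card_map (QuotientGroup.mk' A)
  rw [QuotientGroup.ker_mk'] at hcard
  refine ⟨eq_of_card_eq_of_le_isCyclic inf_le_right inf_le_right ?_,
    eq_of_card_eq_of_le_isCyclic (A := ⊤) le_top le_top he⟩
  have h := (hcard H).trans (hd.trans (hcard H').symm)
  rw [he] at h
  exact Nat.eq_of_mul_eq_mul_right Nat.card_pos h

theorem ncard_card_eq_and_card_map_eq_le [IsCyclic A] [IsCyclic (G ⧸ A)] (d e : ℕ) :
    {H : Subgroup G | Nat.card H = d ∧ Nat.card (H.map (QuotientGroup.mk' A)) = e}.ncard ≤ e := by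
  set π := QuotientGroup.mk' A
  set S := {H : Subgroup G | Nat.card H = d ∧ Nat.card (H.map π) = e}
  obtain hS | ⟨H₀, hH₀⟩ := S.eq_empty_or_nonempty
  · simp [hS]
  set K := H₀ ⊓ A
  obtain ⟨g₀, hg₀⟩ := (H₀.map π).isCyclic_iff_exists_zpowers_eq_top.1 inferInstance
  obtain ⟨x₀, hx₀, rfl⟩ : g₀ ∈ H₀.map π := hg₀ ▸ mem_zpowers g₀
  have hker : π.ker = A := QuotientGroup.ker_mk' A
  have hS_eq : ∀ H ∈ S, H ⊓ A = K ∧ H.map π = zpowers (π x₀) := fun H hH =>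
    hg₀ ▸ inf_eq_and_map_eq_of_card_eq (hH.1.trans hH₀.1.symm) (hH.2.trans hH₀.2.symm)
  have hpow : ∀ H ∈ S, ∀ x ∈ H, x ^ e ∈ K := fun H hH x hx => by
    simpa only [hker, hH.2, (hS_eq H hH).1] using pow_card_map_mem_inf_ker π hx
  set Z := A ⊓ K.comap (powMonoidHom e)
  have hKZ : K ≤ Z := fun k hk => ⟨hk.2, pow_mem hk e⟩
  have hSZ : S ⊆ Set.range fun z : Z => K ⊔ zpowers (x₀ * z) := by
    intro H hH
    obtain ⟨x, hx, hxg⟩ : π x₀ ∈ H.map π := (hS_eq H hH).2 ▸ mem_zpowers _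
    have hz : x₀⁻¹ * x ∈ Z := by
      refine mem_inf.2 ⟨hker ▸ MonoidHom.mem_ker.2 ?_, ?_⟩
      · rw [map_mul, map_inv, hxg, inv_mul_cancel]
      · show (x₀⁻¹ * x) ^ e ∈ K
        rw [mul_pow, inv_pow]
        exact mul_mem (inv_mem (hpow H₀ hH₀ x₀ hx₀)) (hpow H hH x hx)
    refine ⟨⟨_, hz⟩, ?_⟩
    have hgen := eq_inf_ker_sup_zpowers π hx (hxg ▸ (hS_eq H hH).2)
    rw [hker, (hS_eq H hH).1] at hgen
    simp [hgen]
  have he : 0 < e := hH₀.2 ▸ Nat.card_pos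
  refine Nat.le_of_mul_le_mul_right ?_ (Nat.card_pos (α := K))
  calc S.ncard * Nat.card K
      ≤ (Set.range fun z : Z => K ⊔ zpowers (x₀ * z)).ncard * Nat.card K :=
        Nat.mul_le_mul_right _ (Set.ncard_le_ncard hSZ)
    _ ≤ Nat.card Z := ncard_range_sup_zpowers_mul_mul_card_le hKZ x₀
    _ ≤ e * Nat.card K := card_inf_comap_powMonoidHom_le K he

theorem ncard_card_eq_le_sigma [IsCyclic A] [IsCyclic (G ⧸ A)] (d : ℕ) :
    {H : Subgroup G | Nat.card H = d}.ncard ≤ ArithmeticFunction.sigma 1 d := by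
  set π := QuotientGroup.mk' A
  calc _ ≤ (⋃ e ∈ d.divisors,
        {H : Subgroup G | Nat.card H = d ∧ Nat.card (H.map π) = e}).ncard := by
        refine Set.ncard_le_ncard fun H hH => ?_
        simp only [Set.mem_iUnion, Set.mem_ofPred_eq, Nat.mem_divisors, exists_prop]
        exact ⟨_, ⟨hH ▸ card_map_dvd H π, hH ▸ Nat.card_pos.ne'⟩, hH, rfl⟩
    _ ≤ ∑ e ∈ d.divisors, {H : Subgroup G | Nat.card H = d ∧ Nat.card (H.map π) = e}.ncard :=
        Finset.set_ncard_biUnion_le _ _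
    _ ≤ ∑ e ∈ d.divisors, e := Finset.sum_le_sum fun e _ => ncard_card_eq_and_card_map_eq_le d e
    _ = ArithmeticFunction.sigma 1 d := (ArithmeticFunction.sigma_one_apply d).symm

end Subgroup

theorem ArithmeticFunction.sigma_one_prime_pow_le {p : ℕ} (hp : p.Prime) (i : ℕ) :
    ArithmeticFunction.sigma 1 (p ^ i) ≤ 2 * p ^ i := by
  rw [ArithmeticFunction.sigma_one_apply_prime_pow hp]
  induction i with
  | zero => simp
  | succ i ih =>
    rw [Finset.sum_range_succ, pow_succ]
    nlinarith [hp.two_le, Nat.zero_le (p ^ i)]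

theorem finsum_mem_eq_ncard_mul {α R : Type*} [Semiring R] {s : Set α} (hs : s.Finite)
    {f : α → R} {c : R} (h : ∀ x ∈ s, f x = c) : ∑ᶠ x ∈ s, f x = s.ncard * c := by
  rw [finsum_mem_congr rfl h, finsum_mem_eq_finite_toFinset_sum _ hs, Finset.sum_const,
    Set.ncard_eq_toFinset_card s hs, nsmul_eq_mul]

theorem finsum_ne_bot_eq_sum_finsum_card_eq {G M : Type*} [Group G] [Finite G] [AddCommMonoid M]
    {p n : ℕ} (hp : p.Prime) (hcard : Nat.card G = p ^ n) (f : Subgroup G → M) :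
    ∑ᶠ (H : Subgroup G) (_ : H ≠ ⊥), f H =
      ∑ i ∈ Finset.Icc 1 n, ∑ᶠ (H : Subgroup G) (_ : Nat.card H = p ^ i), f H := by
  have hunion : {H : Subgroup G | H ≠ ⊥} =
      ⋃ i ∈ (Finset.Icc 1 n : Set ℕ), {H : Subgroup G | Nat.card H = p ^ i} := by
    ext H
    obtain ⟨i, hi, hHi⟩ := (Nat.dvd_prime_pow hp).1 (hcard ▸ H.card_subgroup_dvd_card)
    have hbot : H ≠ ⊥ ↔ i ≠ 0 := by
      rw [Ne, ← Subgroup.card_eq_one, hHi, Nat.pow_eq_one]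
      simp [hp.ne_one]
    simp [hbot, hHi, (Nat.pow_right_injective hp.two_le).eq_iff]
    omega
  have hdisj : (Finset.Icc 1 n : Set ℕ).PairwiseDisjoint
      fun i => {H : Subgroup G | Nat.card H = p ^ i} :=
    fun i _ j _ hij => Set.disjoint_left.2 fun H hi hj =>
      hij (Nat.pow_right_injective hp.two_le (hi.symm.trans hj))
  change ∑ᶠ H ∈ {H : Subgroup G | H ≠ ⊥}, f H = _
  rw [hunion, finsum_mem_biUnion hdisj (Finset.finite_toSet _) fun _ _ => Set.toFinite _,
    finsum_mem_coe_finset]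
  rfl

theorem sum_Icc_one_pow_le_of_le_one_third {r : ℝ} (hr₀ : 0 ≤ r) (hr : r ≤ 1 / 3) (n : ℕ) :
    ∑ i ∈ Finset.Icc 1 n, r ^ i ≤ 3 / 2 * r := by
  rw [← Finset.Ico_add_one_right_eq_Icc]
  refine (geom_sum_Ico_le_of_lt_one hr₀ (by linarith)).trans ?_
  rw [pow_one, div_le_iff₀ (by linarith)]
  nlinarith

section RankTwo

variable {G : Type*} [CommGroup G] [Finite G] {p : ℕ}

theorem ncard_card_eq_prime_pow_le (hp : p.Prime) {a b : G}
    (hab : Subgroup.closure {a, b} = ⊤) (i : ℕ) :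
    {H : Subgroup G | Nat.card H = p ^ i}.ncard ≤ 2 * p ^ i := by
  have := Subgroup.isCyclic_quotient_zpowers_of_closure_pair_eq_top hab
  exact (Subgroup.ncard_card_eq_le_sigma (A := Subgroup.zpowers a) _).trans
    (ArithmeticFunction.sigma_one_prime_pow_le hp i)

theorem finsum_card_eq_prime_pow_rpow_neg_le (hp : p.Prime) {a b : G}
    (hab : Subgroup.closure {a, b} = ⊤) (i : ℕ) (k : ℝ) :
    ∑ᶠ (H : Subgroup G) (_ : Nat.card H = p ^ i), (Nat.card H : ℝ) ^ (-k) ≤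
      2 * (p : ℝ) ^ ((i : ℝ) * (1 - k)) := by
  have hp₀ : (0 : ℝ) < p := Nat.cast_pos.2 hp.pos
  change ∑ᶠ H ∈ {H : Subgroup G | Nat.card H = p ^ i}, _ ≤ _
  rw [finsum_mem_eq_ncard_mul (Set.toFinite _) (c := ((p : ℝ) ^ i) ^ (-k))
    fun H hH => by rw [hH, Nat.cast_pow]]
  calc _ ≤ (2 * (p : ℝ) ^ i) * ((p : ℝ) ^ i) ^ (-k) := by
        gcongr
        exact_mod_cast ncard_card_eq_prime_pow_le hp hab i
    _ = 2 * (p : ℝ) ^ ((i : ℝ) * (1 - k)) := by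
        rw [mul_assoc, ← Real.rpow_natCast, ← Real.rpow_mul hp₀.le, ← Real.rpow_add hp₀]
        ring_nf

theorem finsum_ne_bot_one_div_card_le (hp : p.Prime) {a b : G}
    (hab : Subgroup.closure {a, b} = ⊤) {n : ℕ} (hcard : Nat.card G = p ^ n) :
    ∑ᶠ (H : Subgroup G) (_ : H ≠ ⊥), (1 : ℝ) / (Nat.card H : ℝ) ≤ 2 * n :=
  calc ∑ᶠ (H : Subgroup G) (_ : H ≠ ⊥), (1 : ℝ) / (Nat.card H : ℝ)
      = ∑ i ∈ Finset.Icc 1 n,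
          ∑ᶠ (H : Subgroup G) (_ : Nat.card H = p ^ i), (Nat.card H : ℝ) ^ (-1 : ℝ) := by
        simp only [Real.rpow_neg_one, one_div]
        exact finsum_ne_bot_eq_sum_finsum_card_eq hp hcard _
    _ ≤ ∑ i ∈ Finset.Icc 1 n, (2 : ℝ) :=
        Finset.sum_le_sum fun i _ => by simpa using finsum_card_eq_prime_pow_rpow_neg_le hp hab i 1
    _ = 2 * n := by simp [mul_comm]

theorem finsum_ne_bot_rpow_neg_le (hp : p.Prime) {a b : G}
    (hab : Subgroup.closure {a, b} = ⊤) {n : ℕ} (hcard : Nat.card G = p ^ n) {k : ℝ}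
    (hp₃ : 3 ≤ p) (hk : 2 ≤ k) :
    ∑ᶠ (H : Subgroup G) (_ : H ≠ ⊥), (Nat.card H : ℝ) ^ (-k) ≤ 3 * (p : ℝ) ^ (1 - k) := by
  have hp₀ : (0 : ℝ) < p := Nat.cast_pos.2 hp.pos
  set r := (p : ℝ) ^ (1 - k)
  have hr : r ≤ 1 / 3 :=
    calc r ≤ (p : ℝ) ^ (-1 : ℝ) :=
          Real.rpow_le_rpow_of_exponent_le (by exact_mod_cast hp.one_lt.le) (by linarith)
      _ ≤ 1 / 3 := by
          rw [Real.rpow_neg_one, one_div]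
          exact inv_anti₀ (by norm_num) (by exact_mod_cast hp₃)
  calc _ = ∑ i ∈ Finset.Icc 1 n,
          ∑ᶠ (H : Subgroup G) (_ : Nat.card H = p ^ i), (Nat.card H : ℝ) ^ (-k) :=
        finsum_ne_bot_eq_sum_finsum_card_eq hp hcard _
    _ ≤ ∑ i ∈ Finset.Icc 1 n, 2 * r ^ i := Finset.sum_le_sum fun i _ =>
        (finsum_card_eq_prime_pow_rpow_neg_le hp hab i k).trans_eq
          (by rw [mul_comm (i : ℝ), Real.rpow_mul_natCast hp₀.le])
    _ ≤ 3 * r := by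
        rw [← Finset.mul_sum]
        linarith [sum_Icc_one_pow_le_of_le_one_third (Real.rpow_nonneg hp₀.le _) hr n]

end RankTwo

theorem divisor_sums_general (p : ℕ) (hp : p.Prime) (n : ℕ)
    (G : Type*) [CommGroup G]
    (hrk : ∃ a b : G, Subgroup.closure {a, b} = ⊤)
    (hcard : Nat.card G = p ^ n) :
    (∀ (i : ℕ) (k : ℝ),
      ∑ᶠ (H : Subgroup G) (_ : Nat.card H = p ^ i), ((Nat.card H : ℝ)) ^ (-k)
        ≤ 2 * (p : ℝ) ^ ((i : ℝ) * (1 - k))) ∧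
    (∑ᶠ (H : Subgroup G) (_ : H ≠ ⊥), (1 : ℝ) / (Nat.card H : ℝ) ≤ 2 * n) ∧
    (∀ k : ℝ, 3 ≤ p → 2 ≤ k →
      ∑ᶠ (H : Subgroup G) (_ : H ≠ ⊥), ((Nat.card H : ℝ)) ^ (-k)
        ≤ 3 * (p : ℝ) ^ (1 - k)) := by
  obtain ⟨a, b, hab⟩ := hrk
  have : Finite G := Nat.finite_of_card_ne_zero (hcard ▸ pow_ne_zero n hp.ne_zero)
  exact ⟨finsum_card_eq_prime_pow_rpow_neg_le hp hab, finsum_ne_bot_one_div_card_le hp hab hcard,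
    fun _ hp₃ hk => finsum_ne_bot_rpow_neg_le hp hab hcard hp₃ hk⟩

/-- **Lemma (divisor sums for rank two `p`-groups).** Let `G` be a rank two abelian
`p`-group with `|G| = pⁿ`. Then (i) `∑_{|H| = pⁱ} |H|^{-k} ≤ 2·p^{i(1-k)}` for every
`i` and real `k`; (ii) `∑_{H ≠ 1} 1/|H| ≤ 2n`; (iii) if `p ≥ 3` and `k ≥ 2` then
`∑_{H ≠ 1} |H|^{-k} ≤ 3·p^{1-k}`. -/
theorem divisor_sums (p : ℕ) (hp : p.Prime) (n : ℕ)
    (G : Type*) [CommGroup G] [Fintype G] (hG : IsPGroup p G)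
    (hrk : ∃ a b : G, Subgroup.closure {a, b} = ⊤)
    (hcard : Nat.card G = p ^ n) :
    (∀ (i : ℕ) (k : ℝ),
      ∑ᶠ (H : Subgroup G) (_ : Nat.card H = p ^ i), ((Nat.card H : ℝ)) ^ (-k)
        ≤ 2 * (p : ℝ) ^ ((i : ℝ) * (1 - k))) ∧
    (∑ᶠ (H : Subgroup G) (_ : H ≠ ⊥), (1 : ℝ) / (Nat.card H : ℝ) ≤ 2 * n) ∧
    (∀ k : ℝ, 3 ≤ p → 2 ≤ k →
      ∑ᶠ (H : Subgroup G) (_ : H ≠ ⊥), ((Nat.card H : ℝ)) ^ (-k)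
        ≤ 3 * (p : ℝ) ^ (1 - k)) :=
  divisor_sums_general p hp n G hrk hcard
end
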